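/- arXiv:1208.5820 — 8 statements merged into one kernel-verified Lean document; each statement's English description precedes it below -/
import Mathlib

section
/- Let c_1, …, c_L be nonnegative integers with c_1 > 0 and c_L > 0, let f(x) = x^L − (c_1 x^{L−1} + c_2 x^{L−2} + ⋯ + c_{L−1} x + c_L), and let λ_1 be its unique positive real root. Then every complex root λ of f with λ ≠ λ_1 satisfies |λ| < λ_1. -/
/-!
Dividing by `z ^ L`, a nonzero root `z` of `f` is the reciprocal of a solution of `P w = 1`, where
`P w = ∑ cᵢ wⁱ`. As `P` has nonnegative coefficients, `1 = ‖P w‖ ≤ P ‖w‖`, and `P` is strictly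
increasing on `[0, ∞)` because `c₁ > 0`; hence `λ₁⁻¹ ≤ ‖w‖`. In the equality case the triangle
inequality for `P w` is an equality with a positive real sum, so every term `cᵢ wⁱ` is a nonnegative
real; for `i = 1` this makes `w` itself the positive real `λ₁⁻¹`.
-/

open Polynomial

/-- The characteristic polynomial `x^L − (c₁ x^{L−1} + c₂ x^{L−2} + ⋯ + c_{L−1} x + c_L)`
of a positive linear recurrence, as a complex polynomial. -/
noncomputable def charPolyC (L : ℕ) (c : ℕ → ℕ) : Polynomial ℂ :=
  X ^ L - ∑ i ∈ Finset.Icc 1 L, C (c i : ℂ) * X ^ (L - i)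

open Finset

theorem Complex.eq_norm_of_sum_eq_sum_norm {ι : Type*} {s : Finset ι} {u : ι → ℂ}
    (h : ∑ i ∈ s, u i = ∑ i ∈ s, (‖u i‖ : ℂ)) : ∀ i ∈ s, u i = ‖u i‖ := by
  have hre : ∑ i ∈ s, (u i).re = ∑ i ∈ s, ‖u i‖ := by
    simpa only [Complex.re_sum, Complex.ofReal_re] using congrArg Complex.re h
  intro i hi
  exact Complex.eq_coe_norm_of_nonneg <| Complex.re_eq_norm.mp <|
    (sum_eq_sum_iff_of_le fun j _ => Complex.re_le_norm (u j)).mp hre i hi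

theorem Complex.norm_ofReal_mul_pow {a : ℝ} (ha : 0 ≤ a) (w : ℂ) (n : ℕ) :
    ‖(a : ℂ) * w ^ n‖ = a * ‖w‖ ^ n := by
  rw [norm_mul, norm_pow, Complex.norm_of_nonneg ha]

section NonnegCoeffs

variable {s : Finset ℕ} {a : ℕ → ℝ}

theorem strictMonoOn_sum_mul_pow (ha : ∀ i ∈ s, 0 ≤ a i) {j : ℕ} (hj : j ∈ s) (hj0 : j ≠ 0)
    (haj : 0 < a j) : StrictMonoOn (fun t : ℝ => ∑ i ∈ s, a i * t ^ i) (Set.Ici 0) := by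
  intro x hx y _ hxy
  refine sum_lt_sum (fun i hi => ?_) ⟨j, hj, ?_⟩
  · exact mul_le_mul_of_nonneg_left (pow_le_pow_left₀ hx hxy.le i) (ha i hi)
  · exact mul_lt_mul_of_pos_left (pow_lt_pow_left₀ hxy hx hj0) haj

theorem norm_sum_mul_pow_le (ha : ∀ i ∈ s, 0 ≤ a i) (w : ℂ) :
    ‖∑ i ∈ s, (a i : ℂ) * w ^ i‖ ≤ ∑ i ∈ s, a i * ‖w‖ ^ i :=
  (norm_sum_le _ _).trans_eq <| sum_congr rfl fun i hi => Complex.norm_ofReal_mul_pow (ha i hi) w i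

theorem eq_norm_of_sum_mul_pow_eq (ha : ∀ i ∈ s, 0 ≤ a i) (h1 : 1 ∈ s) (ha1 : 0 < a 1)
    {w : ℂ} (h : ∑ i ∈ s, (a i : ℂ) * w ^ i = ∑ i ∈ s, a i * ‖w‖ ^ i) : w = ‖w‖ := by
  have hterms := Complex.eq_norm_of_sum_eq_sum_norm (u := fun i => (a i : ℂ) * w ^ i) <| by
    rw [h, Complex.ofReal_sum]
    exact sum_congr rfl fun i hi => by rw [Complex.norm_ofReal_mul_pow (ha i hi)]
  have hterm1 : (a 1 : ℂ) * w ^ 1 = ‖(a 1 : ℂ) * w ^ 1‖ := hterms 1 h1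
  rw [Complex.norm_ofReal_mul_pow ha1.le, pow_one, pow_one, Complex.ofReal_mul] at hterm1
  exact mul_left_cancel₀ (Complex.ofReal_ne_zero.mpr ha1.ne') hterm1

theorem lt_norm_or_eq_of_sum_mul_pow_eq_one (ha : ∀ i ∈ s, 0 ≤ a i) (h1 : 1 ∈ s) (ha1 : 0 < a 1)
    {t : ℝ} (ht : 0 ≤ t) (hPt : ∑ i ∈ s, a i * t ^ i = 1)
    {w : ℂ} (hPw : ∑ i ∈ s, (a i : ℂ) * w ^ i = 1) : t < ‖w‖ ∨ w = t := by
  have hle : ∑ i ∈ s, a i * t ^ i ≤ ∑ i ∈ s, a i * ‖w‖ ^ i := by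
    simpa [hPt, hPw] using norm_sum_mul_pow_le ha w
  rcases ((strictMonoOn_sum_mul_pow ha h1 one_ne_zero ha1).le_iff_le ht (norm_nonneg w)).mp hle
    |>.lt_or_eq with hlt | heq
  · exact .inl hlt
  · have hw : w = ‖w‖ := eq_norm_of_sum_mul_pow_eq ha h1 ha1 (by rw [hPw, ← heq, hPt]; simp)
    exact .inr (by rw [hw, heq])

end NonnegCoeffs

theorem eval_charPolyC (L : ℕ) (c : ℕ → ℕ) (z : ℂ) :
    (charPolyC L c).eval z = z ^ L - ∑ i ∈ Icc 1 L, (c i : ℂ) * z ^ (L - i) := by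
  simp [charPolyC, eval_finsetSum]

theorem charPolyC_eval_eq_zero_iff {L : ℕ} {c : ℕ → ℕ} {z : ℂ} (hz : z ≠ 0) :
    (charPolyC L c).eval z = 0 ↔ ∑ i ∈ Icc 1 L, ((c i : ℝ) : ℂ) * z⁻¹ ^ i = 1 := by
  have hfactor : ∑ i ∈ Icc 1 L, (c i : ℂ) * z ^ (L - i)
      = z ^ L * ∑ i ∈ Icc 1 L, ((c i : ℝ) : ℂ) * z⁻¹ ^ i := by
    rw [mul_sum]
    refine sum_congr rfl fun i hi => ?_
    rw [pow_sub₀ _ hz (mem_Icc.mp hi).2, inv_pow]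
    push_cast
    ring
  rw [eval_charPolyC, sub_eq_zero, hfactor, eq_comm, mul_eq_left₀ (pow_ne_zero _ hz)]

theorem dominant_root_general (L : ℕ) (hL : 1 ≤ L) (c : ℕ → ℕ)
    (hc1 : 0 < c 1)
    (lam1 : ℝ) (hpos : 0 < lam1)
    (hroot : (charPolyC L c).eval (lam1 : ℂ) = 0) :
    ∀ z : ℂ, (charPolyC L c).eval z = 0 → z ≠ (lam1 : ℂ) → ‖z‖ < lam1 := by
  intro z hz hne
  rcases eq_or_ne z 0 with rfl | hz0
  · simpa using hpos
  rw [charPolyC_eval_eq_zero_iff hz0] at hz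
  rw [charPolyC_eval_eq_zero_iff (Complex.ofReal_ne_zero.mpr hpos.ne')] at hroot
  have hcoeff : ∀ i ∈ Icc 1 L, (0 : ℝ) ≤ c i := fun i _ => Nat.cast_nonneg _
  rcases lt_norm_or_eq_of_sum_mul_pow_eq_one hcoeff (mem_Icc.mpr ⟨le_rfl, hL⟩)
    (Nat.cast_pos.mpr hc1) (inv_nonneg.mpr hpos.le) (by exact_mod_cast hroot) hz with hlt | heq
  · rwa [norm_inv, inv_lt_inv₀ hpos (norm_pos_iff.mpr hz0)] at hlt
  · exact absurd (by simpa using heq) hne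

/-- Let `c₁, …, c_L` be nonnegative integers with `c₁ > 0` and `c_L > 0`,
let `f(x) = x^L − (c₁ x^{L−1} + ⋯ + c_L)`, and let `λ₁` be its unique positive real root.
Then every complex root `λ ≠ λ₁` of `f` satisfies `|λ| < λ₁`. -/
theorem dominant_root (L : ℕ) (hL : 1 ≤ L) (c : ℕ → ℕ)
    (hc1 : 0 < c 1) (hcL : 0 < c L)
    (lam1 : ℝ) (hpos : 0 < lam1)
    (hroot : (charPolyC L c).eval (lam1 : ℂ) = 0)
    (huniq : ∀ x : ℝ, 0 < x → (charPolyC L c).eval (x : ℂ) = 0 → x = lam1) :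
    ∀ z : ℂ, (charPolyC L c).eval z = 0 → z ≠ (lam1 : ℂ) → ‖z‖ < lam1 :=
  dominant_root_general L hL c hc1 lam1 hpos hroot
end

section
/- Let {G_n} be a positive linear recurrence sequence of length L ≥ 2, let λ_1 be the unique positive root of its characteristic polynomial x^L − (c_1 x^{L−1} + ⋯ + c_L), and let λ_2 be a complex root of second-largest absolute value. Then there exist constants a_1 > 0 and C > 0 such that |G_n − a_1 λ_1^n| ≤ C·n^{L−2}·|λ_2|^n for all n ≥ 1; in particular G_n/λ_1^n → a_1 as n → ∞. -/
open Polynomial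

/-!
A sequence satisfies the recurrence exactly when `p(S)` kills it, where `p` is the
characteristic polynomial and `S` the shift `u ↦ (n ↦ u (n + 1))`; since `G 0` is not part of
the sequence, this is applied to `n ↦ G (n + 1)`. The root `λ₁` is simple, because
`λ₁ p'(λ₁) = ∑ i cᵢ λ₁^{L-i} ≥ ∑ cᵢ λ₁^{L-i} = λ₁^L > 0`, so `p = (X - λ₁) q` with `q(λ₁) ≠ 0`.
Then `q(S) G` is geometric of ratio `λ₁`, and subtracting a suitable `a λ₁ⁿ` leaves a sequence
`E` killed by `q(S)`. Splitting off the roots `μ` of `q` one at a time, all with `|μ| ≤ |λ₂|`,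
each first-order recurrence `E_{n+1} = μ E_n + K_n` costs at most one factor `n`, whence
`|E_n| ≤ C n^{L-2} |λ₂|ⁿ`. Finally `a > 0` because `G_n ≥ λ₁^{n-L}`.
-/

open Filter Topology Finset

def seqShift (R : Type*) [CommSemiring R] : Module.End R (ℕ → R) :=
  LinearMap.funLeft R R Nat.succ

section Shift

variable {R : Type*}

@[simp]
lemma seqShift_apply [CommSemiring R] (u : ℕ → R) (n : ℕ) : seqShift R u n = u (n + 1) := rfl

lemma seqShift_pow_apply [CommSemiring R] (k : ℕ) (u : ℕ → R) (n : ℕ) :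
    (seqShift R ^ k) u n = u (n + k) := by
  induction k generalizing u with
  | zero => rfl
  | succ k ih => rw [pow_succ, Module.End.mul_apply, ih, seqShift_apply, add_assoc]

variable [CommRing R]

lemma aeval_seqShift_geom (p : R[X]) (z : R) :
    aeval (seqShift R) p (fun n => z ^ n) = p.eval z • fun n => z ^ n :=
  Module.End.aeval_apply_of_mem_apply_eq_smul <| funext fun n => by simp [pow_succ']

lemma aeval_seqShift_X_sub_C_apply (μ : R) (u : ℕ → R) (n : ℕ) :
    aeval (seqShift R) (X - C μ) u n = u (n + 1) - μ * u n := by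
  simp [Module.algebraMap_end_apply]

lemma eq_smul_geom_of_aeval_seqShift_X_sub_C_eq_zero {μ : R} {u : ℕ → R}
    (hu : aeval (seqShift R) (X - C μ) u = 0) : u = u 0 • fun n => μ ^ n := by
  funext n
  induction n with
  | zero => simp
  | succ n ih =>
    have := congrFun hu n
    rw [aeval_seqShift_X_sub_C_apply, Pi.zero_apply, sub_eq_zero] at this
    simp only [Pi.smul_apply, smul_eq_mul] at ih ⊢
    rw [this, ih]; ring

end Shift

lemma exists_norm_le_of_succ_eq_add_mul {R : Type*} [SeminormedRing R] {u v : ℕ → R} {μ : R}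
    {r C : ℝ} {d : ℕ} (hr : 0 < r) (hμ : ‖μ‖ ≤ r) (hC : 0 < C)
    (hv : ∀ n, ‖v n‖ ≤ C * (n + 1) ^ d * r ^ n) (hu : ∀ n, u (n + 1) = v n + μ * u n) :
    ∃ C' > 0, ∀ n, ‖u n‖ ≤ C' * (n + 1) ^ (d + 1) * r ^ n := by
  set C' := ‖u 0‖ + C / r
  have hC' : C ≤ C' * r := by
    rw [add_mul, div_mul_cancel₀ _ hr.ne']; nlinarith [norm_nonneg (u 0)]
  refine ⟨C', add_pos_of_nonneg_of_pos (norm_nonneg _) (div_pos hC hr), fun n => ?_⟩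
  induction n with
  | zero => simpa [C'] using div_nonneg hC.le hr.le
  | succ n ih =>
    have hpow : ((n : ℝ) + 1) ^ d * (n + 2) ≤ ((n : ℝ) + 2) ^ (d + 1) := by
      rw [pow_succ]; gcongr; linarith
    calc ‖u (n + 1)‖ ≤ ‖v n‖ + ‖μ‖ * ‖u n‖ := by
          rw [hu]; exact (norm_add_le _ _).trans (by gcongr; exact norm_mul_le _ _)
      _ ≤ C * (n + 1) ^ d * r ^ n + r * (C' * (n + 1) ^ (d + 1) * r ^ n) :=
          add_le_add (hv n) (mul_le_mul hμ ih (norm_nonneg _) hr.le)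
      _ ≤ C' * r * (n + 1) ^ d * r ^ n + r * (C' * (n + 1) ^ (d + 1) * r ^ n) := by gcongr
      _ = C' * (((n : ℝ) + 1) ^ d * (n + 2)) * r ^ (n + 1) := by ring
      _ ≤ C' * ((n : ℝ) + 2) ^ (d + 1) * r ^ (n + 1) := by gcongr
      _ = C' * ((n + 1 : ℕ) + 1 : ℝ) ^ (d + 1) * r ^ (n + 1) := by push_cast; ring

theorem Polynomial.exists_eq_X_sub_C_mul_of_natDegree_eq_succ {K : Type*} [Field K]
    [IsAlgClosed K] {q : K[X]} {d : ℕ} (hq : q.natDegree = d + 1) :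
    ∃ μ q', q = (X - C μ) * q' ∧ q'.natDegree = d := by
  obtain ⟨μ, hμ⟩ := IsAlgClosed.exists_root q (natDegree_pos_iff_degree_pos.mp (by omega)).ne'
  refine ⟨μ, q /ₘ (X - C μ), (mul_divByMonic_eq_iff_isRoot.mpr hμ).symm, ?_⟩
  rw [natDegree_divByMonic _ (monic_X_sub_C μ), hq, natDegree_X_sub_C, Nat.add_sub_cancel]

section Decay

variable {𝕜 : Type*} [NormedField 𝕜] [IsAlgClosed 𝕜]

theorem exists_norm_le_of_aeval_seqShift_eq_zero {r : ℝ} (hr : 0 < r) {d : ℕ} {q : 𝕜[X]}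
    (hq : q.natDegree = d + 1) (hroots : ∀ z, q.IsRoot z → ‖z‖ ≤ r) {u : ℕ → 𝕜}
    (hu : aeval (seqShift 𝕜) q u = 0) : ∃ C > 0, ∀ n, ‖u n‖ ≤ C * (n + 1) ^ d * r ^ n := by
  induction d generalizing q u with
  | zero =>
    obtain ⟨μ, q', rfl, hq'⟩ := exists_eq_X_sub_C_mul_of_natDegree_eq_succ hq
    have hq'0 : q' = C (q'.coeff 0) := eq_C_of_natDegree_eq_zero hq'
    have hk : q'.coeff 0 ≠ 0 := fun h => by
      rw [hq'0, h, C_0, mul_zero, natDegree_zero] at hq; exact absurd hq (by simp)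
    rw [mul_comm, aeval_mul, Module.End.mul_apply, hq'0, aeval_C, Module.algebraMap_end_apply,
      smul_eq_zero_iff_right hk] at hu
    have hμ : ‖μ‖ ≤ r := hroots μ (by simp)
    refine ⟨‖u 0‖ + 1, by positivity, fun n => ?_⟩
    rw [eq_smul_geom_of_aeval_seqShift_X_sub_C_eq_zero hu]
    simp only [Pi.smul_apply, smul_eq_mul, norm_mul, norm_pow, pow_zero, mul_one]
    gcongr; linarith
  | succ d ih =>
    obtain ⟨μ, q', rfl, hq'⟩ := exists_eq_X_sub_C_mul_of_natDegree_eq_succ hq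
    rw [mul_comm, aeval_mul, Module.End.mul_apply] at hu
    obtain ⟨C, hC, hv⟩ := ih hq' (fun z hz => hroots z (by simp [hz.eq_zero])) hu
    exact exists_norm_le_of_succ_eq_add_mul hr (hroots μ (by simp)) hC hv
      fun n => by rw [aeval_seqShift_X_sub_C_apply]; ring

theorem exists_norm_sub_mul_pow_le_of_aeval_seqShift_eq_zero {lam : 𝕜} {d : ℕ} {q : 𝕜[X]}
    (hq : q.natDegree = d + 1) (hqlam : q.eval lam ≠ 0) {r : ℝ} (hr : 0 < r)
    (hroots : ∀ z, q.IsRoot z → ‖z‖ ≤ r) {u : ℕ → 𝕜}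
    (hu : aeval (seqShift 𝕜) ((X - C lam) * q) u = 0) :
    ∃ a : 𝕜, ∃ C > 0, ∀ n, ‖u n - a * lam ^ n‖ ≤ C * (n + 1) ^ d * r ^ n := by
  rw [aeval_mul, Module.End.mul_apply] at hu
  set W := aeval (seqShift 𝕜) q u
  set a := W 0 / q.eval lam
  have hE : aeval (seqShift 𝕜) q (u - a • fun n => lam ^ n) = 0 := by
    rw [map_sub, map_smul, aeval_seqShift_geom, smul_smul, div_mul_cancel₀ _ hqlam,
      ← eq_smul_geom_of_aeval_seqShift_X_sub_C_eq_zero hu, sub_self]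
  exact ⟨a, exists_norm_le_of_aeval_seqShift_eq_zero hr hq hroots hE⟩

theorem exists_norm_sub_mul_pow_le_of_aeval_seqShift_succ_eq_zero {lam : 𝕜} (hlam : lam ≠ 0)
    {d : ℕ} {q : 𝕜[X]} (hq : q.natDegree = d + 1) (hqlam : q.eval lam ≠ 0) {r : ℝ} (hr : 0 < r)
    (hroots : ∀ z, q.IsRoot z → ‖z‖ ≤ r) {u : ℕ → 𝕜}
    (hu : aeval (seqShift 𝕜) ((X - C lam) * q) (fun n => u (n + 1)) = 0) :
    ∃ a : 𝕜, ∃ C > 0, ∀ n, 1 ≤ n → ‖u n - a * lam ^ n‖ ≤ C * n ^ d * r ^ n := by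
  obtain ⟨a, C, hC, hbound⟩ :=
    exists_norm_sub_mul_pow_le_of_aeval_seqShift_eq_zero hq hqlam hr hroots hu
  refine ⟨a / lam, C / r, by positivity, fun n hn => ?_⟩
  obtain ⟨m, rfl⟩ := Nat.exists_eq_add_of_le' hn
  calc ‖u (m + 1) - a / lam * lam ^ (m + 1)‖ = ‖u (m + 1) - a * lam ^ m‖ := by
        rw [pow_succ]; congr 2; field_simp
    _ ≤ C * (m + 1) ^ d * r ^ m := hbound m
    _ = C / r * ((m + 1 : ℕ) : ℝ) ^ d * r ^ (m + 1) := by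
        rw [pow_succ]; push_cast; field_simp

end Decay

lemma tendsto_div_pow_of_abs_sub_mul_pow_le {u : ℕ → ℝ} {a C lam r : ℝ} {d : ℕ} (hr : 0 ≤ r)
    (hrlam : r < lam) (h : ∀ n, 1 ≤ n → |u n - a * lam ^ n| ≤ C * n ^ d * r ^ n) :
    Tendsto (fun n => u n / lam ^ n) atTop (𝓝 a) := by
  have hlam : 0 < lam := hr.trans_lt hrlam
  have hdecay : Tendsto (fun n : ℕ => C * ((n : ℝ) ^ d * (r / lam) ^ n)) atTop (𝓝 0) := by
    simpa using (tendsto_pow_const_mul_const_pow_of_lt_one d (div_nonneg hr hlam.le)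
      ((div_lt_one hlam).2 hrlam)).const_mul C
  rw [← tendsto_sub_nhds_zero_iff]
  refine squeeze_zero_norm' ?_ hdecay
  filter_upwards [eventually_ge_atTop 1] with n hn
  have hpow : 0 < lam ^ n := pow_pos hlam n
  calc ‖u n / lam ^ n - a‖ = |u n - a * lam ^ n| / lam ^ n := by
        rw [Real.norm_eq_abs, ← abs_of_pos hpow, ← abs_div, abs_of_pos hpow, sub_div,
          mul_div_cancel_right₀ _ hpow.ne']
    _ ≤ C * n ^ d * r ^ n / lam ^ n := by gcongr; exact h n hn
    _ = C * ((n : ℝ) ^ d * (r / lam) ^ n) := by rw [div_pow]; ring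

section CharPoly

variable (L : ℕ) (c : ℕ → ℕ)

lemma charPolyC_eval (z : ℂ) :
    (charPolyC L c).eval z = z ^ L - ∑ i ∈ Icc 1 L, (c i : ℂ) * z ^ (L - i) := by
  simp [charPolyC, eval_finsetSum]

lemma charPolyC_eval_ofReal_eq_zero_iff {x : ℝ} :
    (charPolyC L c).eval (x : ℂ) = 0 ↔ x ^ L = ∑ i ∈ Icc 1 L, (c i : ℝ) * x ^ (L - i) := by
  rw [charPolyC_eval, sub_eq_zero]; norm_cast

lemma natDegree_charPolyC : (charPolyC L c).natDegree = L := by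
  have hlt : (∑ i ∈ Icc 1 L, C (c i : ℂ) * X ^ (L - i)).degree < (L : WithBot ℕ) :=
    (degree_sum_le _ _).trans_lt <| (Finset.sup_lt_iff (WithBot.bot_lt_coe L)).2 fun i hi =>
      (degree_C_mul_X_pow_le _ _).trans_lt <| by
        have := mem_Icc.1 hi; exact Nat.cast_lt.2 (by omega)
  exact natDegree_eq_of_degree_eq_some
    ((degree_sub_eq_left_of_degree_lt (by rwa [degree_X_pow])).trans (degree_X_pow L))

lemma charPolyC_eval_zero (hL : 0 < L) : (charPolyC L c).eval 0 = -(c L : ℂ) := by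
  rw [charPolyC_eval, sum_eq_single_of_mem L (mem_Icc.2 ⟨hL, le_rfl⟩)]
  · simp [hL.ne']
  · intro i hi hiL
    have := mem_Icc.1 hi
    rw [zero_pow (by omega), mul_zero]

lemma mul_eval_derivative_charPolyC (z : ℂ) :
    z * (derivative (charPolyC L c)).eval z
      = L * (charPolyC L c).eval z + ∑ i ∈ Icc 1 L, (i * c i : ℂ) * z ^ (L - i) := by
  have hX : ∀ k : ℕ, z * (derivative (X ^ k : ℂ[X])).eval z = k * z ^ k := by
    rintro (_ | k)
    · simp
    · rw [derivative_X_pow, eval_mul, eval_C, eval_pow, eval_X, Nat.add_sub_cancel]; ring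
  calc z * (derivative (charPolyC L c)).eval z
        = z * (derivative (X ^ L : ℂ[X])).eval z
          - ∑ i ∈ Icc 1 L, (c i : ℂ) * (z * (derivative (X ^ (L - i) : ℂ[X])).eval z) := by
        simp [charPolyC, eval_finsetSum, mul_sub, mul_sum, mul_left_comm]
    _ = _ := by
        simp only [hX, charPolyC_eval, mul_sub, mul_sum, sub_add, ← sum_sub_distrib]
        congr 1
        refine sum_congr rfl fun i hi => ?_
        rw [Nat.cast_sub (mem_Icc.1 hi).2]; ring

lemma eval_divByMonic_charPolyC_ne_zero {x : ℝ} (hx : 0 < x)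
    (hroot : (charPolyC L c).eval (x : ℂ) = 0) :
    (charPolyC L c /ₘ (X - C (x : ℂ))).eval (x : ℂ) ≠ 0 := by
  have hpos : 0 < ∑ i ∈ Icc 1 L, (i * c i : ℝ) * x ^ (L - i) := calc
    0 < x ^ L := pow_pos hx L
    _ = ∑ i ∈ Icc 1 L, (c i : ℝ) * x ^ (L - i) := (charPolyC_eval_ofReal_eq_zero_iff L c).1 hroot
    _ ≤ ∑ i ∈ Icc 1 L, (i * c i : ℝ) * x ^ (L - i) := sum_le_sum fun i hi => by
        gcongr
        exact le_mul_of_one_le_left (by positivity) (by exact_mod_cast (mem_Icc.1 hi).1)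
  intro hq
  have h := mul_eval_derivative_charPolyC L c x
  rw [hroot, mul_zero, zero_add, ← mul_divByMonic_eq_iff_isRoot.mpr hroot] at h
  simp only [derivative_mul, derivative_sub, derivative_X, derivative_C, sub_zero, one_mul,
    eval_add, eval_mul, eval_sub, eval_X, eval_C, sub_self, zero_mul, add_zero, hq, mul_zero] at h
  exact hpos.ne (by exact_mod_cast h)

end CharPoly

section Recurrence

variable {L : ℕ} {c : ℕ → ℕ} {G : ℕ → ℕ}

lemma aeval_seqShift_charPolyC_apply (u : ℕ → ℂ) (n : ℕ) :
    aeval (seqShift ℂ) (charPolyC L c) u n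
      = u (n + L) - ∑ i ∈ Icc 1 L, c i * u (n + (L - i)) := by
  simp [charPolyC, seqShift_pow_apply]

lemma aeval_seqShift_charPolyC_eq_zero
    (hGrec : ∀ n, L ≤ n → G (n + 1) = ∑ i ∈ Icc 1 L, c i * G (n + 1 - i)) :
    aeval (seqShift ℂ) (charPolyC L c) (fun n => (G (n + 1) : ℂ)) = 0 := by
  funext n
  rw [aeval_seqShift_charPolyC_apply, Pi.zero_apply, sub_eq_zero, hGrec (n + L) (by omega)]
  push_cast
  refine sum_congr rfl fun i hi => ?_
  have := mem_Icc.1 hi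
  rw [show n + L + 1 - i = n + (L - i) + 1 by omega]

lemma one_le_of_le_length (hG1 : G 1 = 1)
    (hGsmall : ∀ n, 1 ≤ n → n < L → G (n + 1) = (∑ i ∈ Icc 1 n, c i * G (n + 1 - i)) + 1)
    {n : ℕ} (hn : 1 ≤ n) (hnL : n ≤ L) : 1 ≤ G n := by
  obtain ⟨m, rfl⟩ := Nat.exists_eq_add_of_le' hn
  rcases m.eq_zero_or_pos with rfl | hm
  · rw [hG1]
  · rw [hGsmall m hm (by omega)]; omega

lemma pow_le_mul_pow_of_recurrence {x : ℝ} (hx : 1 ≤ x)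
    (hroot : x ^ L = ∑ i ∈ Icc 1 L, (c i : ℝ) * x ^ (L - i))
    (hinit : ∀ n, 1 ≤ n → n ≤ L → 1 ≤ G n)
    (hGrec : ∀ n, L ≤ n → G (n + 1) = ∑ i ∈ Icc 1 L, c i * G (n + 1 - i)) :
    ∀ n, 1 ≤ n → x ^ n ≤ G n * x ^ L := by
  intro n
  induction n using Nat.strong_induction_on with
  | _ n ih =>
    intro hn
    rcases le_or_gt n L with hnL | hLn
    · calc x ^ n ≤ 1 * x ^ L := by rw [one_mul]; exact pow_le_pow_right₀ hx hnL
        _ ≤ G n * x ^ L := by gcongr; exact_mod_cast hinit n hn hnL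
    obtain ⟨m, rfl⟩ := Nat.exists_eq_add_of_le' hn
    calc x ^ (m + 1) = x ^ (m + 1 - L) * x ^ L := by rw [← pow_add, Nat.sub_add_cancel hLn.le]
      _ = ∑ i ∈ Icc 1 L, (c i : ℝ) * x ^ (m + 1 - i) := by
          rw [hroot, mul_sum]
          refine sum_congr rfl fun i hi => ?_
          have := mem_Icc.1 hi
          rw [mul_left_comm, ← pow_add]; congr 2; omega
      _ ≤ ∑ i ∈ Icc 1 L, (c i : ℝ) * (G (m + 1 - i) * x ^ L) := by
          gcongr with i hi
          have := mem_Icc.1 hi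
          exact ih _ (by omega) (by omega)
      _ = G (m + 1) * x ^ L := by
          rw [hGrec m (by omega), Nat.cast_sum, sum_mul]
          push_cast
          refine sum_congr rfl fun i _ => by ring

end Recurrence

theorem generalized_binet_general (L : ℕ) (hL : 2 ≤ L) (c : ℕ → ℕ)
    (hcL : 0 < c L)
    (G : ℕ → ℕ) (hG1 : G 1 = 1)
    (hGsmall : ∀ n, 1 ≤ n → n < L →
      G (n + 1) = (∑ i ∈ Finset.Icc 1 n, c i * G (n + 1 - i)) + 1)
    (hGrec : ∀ n, L ≤ n →
      G (n + 1) = ∑ i ∈ Finset.Icc 1 L, c i * G (n + 1 - i))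
    (lam1 : ℝ) (hlam1 : 1 < lam1)
    (hroot : (charPolyC L c).eval (lam1 : ℂ) = 0)
    (hdom : ∀ z : ℂ, (charPolyC L c).eval z = 0 → z ≠ (lam1 : ℂ) →
      ‖z‖ < lam1)
    (lam2 : ℂ) (hlam2root : (charPolyC L c).eval lam2 = 0)
    (hlam2ne : lam2 ≠ (lam1 : ℂ))
    (hsecond : ∀ z : ℂ, (charPolyC L c).eval z = 0 → z ≠ (lam1 : ℂ) →
      ‖z‖ ≤ ‖lam2‖) :
    ∃ a1 C : ℝ, 0 < a1 ∧ 0 < C ∧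
      (∀ n : ℕ, 1 ≤ n →
        |(G n : ℝ) - a1 * lam1 ^ n| ≤ C * (n : ℝ) ^ (L - 2) * ‖lam2‖ ^ n) ∧
      Filter.Tendsto (fun n => (G n : ℝ) / lam1 ^ n) Filter.atTop (nhds a1) := by
  have hlam1pos : 0 < lam1 := by linarith
  set q := charPolyC L c /ₘ (X - C (lam1 : ℂ))
  have hpq : (X - C (lam1 : ℂ)) * q = charPolyC L c := mul_divByMonic_eq_iff_isRoot.mpr hroot
  have hqdeg : q.natDegree = L - 2 + 1 := by
    rw [natDegree_divByMonic _ (monic_X_sub_C _), natDegree_charPolyC, natDegree_X_sub_C]; omega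
  have hqlam : q.eval (lam1 : ℂ) ≠ 0 := eval_divByMonic_charPolyC_ne_zero L c hlam1pos hroot
  have hlam2pos : 0 < ‖lam2‖ := norm_pos_iff.2 fun h => by
    rw [h, charPolyC_eval_zero L c (by omega), neg_eq_zero, Nat.cast_eq_zero] at hlam2root; omega
  have hqroots : ∀ z, q.IsRoot z → ‖z‖ ≤ ‖lam2‖ := fun z hz =>
    hsecond z (by rw [← hpq, eval_mul, hz.eq_zero, mul_zero]) (by rintro rfl; exact hqlam hz)
  obtain ⟨a, C, hC, hbound⟩ := exists_norm_sub_mul_pow_le_of_aeval_seqShift_succ_eq_zero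
    (by exact_mod_cast hlam1pos.ne') hqdeg hqlam hlam2pos hqroots (u := fun n => (G n : ℂ))
    (by rw [hpq]; exact aeval_seqShift_charPolyC_eq_zero hGrec)
  have hboundR : ∀ n, 1 ≤ n →
      |(G n : ℝ) - a.re * lam1 ^ n| ≤ C * n ^ (L - 2) * ‖lam2‖ ^ n := fun n hn => by
    refine le_trans ?_ (hbound n hn)
    simpa [← Complex.ofReal_pow] using Complex.abs_re_le_norm ((G n : ℂ) - a * (lam1 : ℂ) ^ n)
  have htend := tendsto_div_pow_of_abs_sub_mul_pow_le (norm_nonneg _)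
    (hdom lam2 hlam2root hlam2ne) hboundR
  have hlower : 1 / lam1 ^ L ≤ a.re := ge_of_tendsto htend <|
    (eventually_ge_atTop 1).mono fun n hn => by
      rw [div_le_div_iff₀ (by positivity) (by positivity), one_mul]
      exact pow_le_mul_pow_of_recurrence hlam1.le
        ((charPolyC_eval_ofReal_eq_zero_iff L c).1 hroot)
        (fun _ => one_le_of_le_length hG1 hGsmall) hGrec n hn
  exact ⟨a.re, C, (by positivity : (0 : ℝ) < 1 / lam1 ^ L).trans_le hlower, hC, hboundR, htend⟩

/-- **Generalized Binet's Formula.** Let `{G_n}` be a positive linear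
recurrence sequence of length `L ≥ 2`, `λ₁ > 1` the unique positive root of its
characteristic polynomial (which strictly dominates all other complex roots in absolute
value), and `λ₂` a complex root of second-largest absolute value. Then there are constants
`a₁ > 0` and `C > 0` with `|G_n − a₁ λ₁ⁿ| ≤ C · n^{L−2} · |λ₂|ⁿ` for all `n ≥ 1`;
in particular `G_n / λ₁ⁿ → a₁` as `n → ∞`. -/
theorem generalized_binet (L : ℕ) (hL : 2 ≤ L) (c : ℕ → ℕ)
    (hc1 : 0 < c 1) (hcL : 0 < c L)
    (G : ℕ → ℕ) (hG1 : G 1 = 1)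
    (hGsmall : ∀ n, 1 ≤ n → n < L →
      G (n + 1) = (∑ i ∈ Finset.Icc 1 n, c i * G (n + 1 - i)) + 1)
    (hGrec : ∀ n, L ≤ n →
      G (n + 1) = ∑ i ∈ Finset.Icc 1 L, c i * G (n + 1 - i))
    (lam1 : ℝ) (hlam1 : 1 < lam1)
    (hroot : (charPolyC L c).eval (lam1 : ℂ) = 0)
    (hdom : ∀ z : ℂ, (charPolyC L c).eval z = 0 → z ≠ (lam1 : ℂ) →
      ‖z‖ < lam1)
    (lam2 : ℂ) (hlam2root : (charPolyC L c).eval lam2 = 0)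
    (hlam2ne : lam2 ≠ (lam1 : ℂ))
    (hsecond : ∀ z : ℂ, (charPolyC L c).eval z = 0 → z ≠ (lam1 : ℂ) →
      ‖z‖ ≤ ‖lam2‖) :
    ∃ a1 C : ℝ, 0 < a1 ∧ 0 < C ∧
      (∀ n : ℕ, 1 ≤ n →
        |(G n : ℝ) - a1 * lam1 ^ n| ≤ C * (n : ℝ) ^ (L - 2) * ‖lam2‖ ^ n) ∧
      Filter.Tendsto (fun n => (G n : ℝ) / lam1 ^ n) Filter.atTop (nhds a1) :=
  generalized_binet_general L hL c hcL G hG1 hGsmall hGrec lam1 hlam1 hroot hdom lam2 hlam2root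
    hlam2ne hsecond
end

section
/- Let {K_n} be a Kangaroo recurrence with ℓ hops of length g. If S is the index set of a legal decomposition of a positive integer and i, i′ ∈ S with i < i′, then i′ − i ≥ g; that is, no legal decomposition has a gap of length less than g between summands. -/
/-- The coefficients of a Kangaroo recurrence with `ℓ` hops of length `g`:
`c i = 1` for `i = 1, g+1, 2g+1, …, ℓg+1` and `c i = 0` otherwise. -/
def kanC (g ℓ : ℕ) (i : ℕ) : ℕ :=
  if 1 ≤ i ∧ i ≤ ℓ * g + 1 ∧ i % g = 1 % g then 1 else 0

/-- Legality of a coefficient sequence `a_1, …, a_m` (encoded as a list) with respect to a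
positive linear recurrence with coefficients `c_1, …, c_L`:
either `m < L` and `a_i = c_i` for all `i`, or the list is
`c_1, …, c_{s-1}, a_s, 0, …, 0` (with `1 ≤ s ≤ L`, `a_s < c_s`, `t ≥ 0` zeros)
followed by a legal (possibly empty) sequence. -/
inductive IsLegal (L : ℕ) (c : ℕ → ℕ) : List ℕ → Prop
  | short (m : ℕ) (h : m < L) :
      IsLegal L c ((List.range m).map fun i => c (i + 1))
  | long (s t : ℕ) (a : ℕ) (rest : List ℕ)
      (hs1 : 1 ≤ s) (hsL : s ≤ L) (ha : a < c s)
      (hrest : IsLegal L c rest) :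
      IsLegal L c
        (((List.range (s - 1)).map fun i => c (i + 1)) ++ a :: (List.replicate t 0 ++ rest))

/-- The indicator list `a_1, …, a_m` of a set `S` of indices, where `a_j = 1` iff
`m + 1 - j ∈ S` (so the list entry `a_1` corresponds to the largest index `m`). -/
def indList (m : ℕ) (S : Finset ℕ) : List ℕ :=
  (List.range m).map fun j => if m - j ∈ S then 1 else 0

/-- A finite set `S` of indices is legal if all its elements are `≥ 1` and, when `S` is
nonempty, the indicator coefficient list (of length the maximum of `S`) is legal. -/
def IsLegalSet (L : ℕ) (c : ℕ → ℕ) (S : Finset ℕ) : Prop :=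
  (∀ i ∈ S, 1 ≤ i) ∧ (S.Nonempty → IsLegal L c (indList (S.sup id) S))

/-!
A legal decomposition is a concatenation of blocks `c_1, …, c_{s-1}, 0, 0, …, 0`: since every
`c_i ≤ 1`, the entry `a_s < c_s` must be `0` and `c_s = 1`. The nonzero entries of a block sit at
the support of `c`, whose elements `1, g + 1, …, ℓg + 1` are pairwise `g` apart, and the next
block starts after position `s`, itself a support point of `c`, so it also starts at least
`g` after every nonzero entry of the current block.
-/

def GapsAtLeast (g : ℕ) (f : ℕ → ℕ) : Prop :=
  ∀ ⦃j j'⦄, j < j' → f j ≠ 0 → f j' ≠ 0 → g ≤ j' - j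

theorem List.getD_map_range (f : ℕ → ℕ) (m j : ℕ) :
    ((List.range m).map f).getD j 0 = if j < m then f j else 0 := by
  simp only [List.getD_eq_getElem?_getD, List.getElem?_map]
  split <;> simp_all

theorem List.getD_map_range_append_zeros (f : ℕ → ℕ) (n t j : ℕ) (rest : List ℕ) :
    ((List.range n).map f ++ 0 :: (List.replicate t 0 ++ rest)).getD j 0 =
      if j < n then f j else if j < n + t + 1 then 0 else rest.getD (j - (n + t + 1)) 0 := by
  rw [← List.cons_append, ← List.replicate_succ, ← List.append_assoc]
  simp only [List.getD_eq_getElem?_getD, List.getElem?_append, List.getElem?_map,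
    List.getElem?_replicate, List.length_append, List.length_map, List.length_range,
    List.length_replicate, ← Nat.add_assoc]
  split_ifs <;> simp_all
  omega

theorem IsLegal.gapsAtLeast {L g : ℕ} {c : ℕ → ℕ} (hc_le : ∀ i, c i ≤ 1) (hc : GapsAtLeast g c)
    {l : List ℕ} (h : IsLegal L c l) : GapsAtLeast g (fun j => l.getD j 0) := by
  induction h with
  | short m _ =>
    intro j j' hjj' hj hj'
    simp only [List.getD_map_range, ite_ne_right_iff] at hj hj'
    simpa using hc (Nat.succ_lt_succ hjj') hj.2 hj'.2
  | long s t a rest _ _ ha _ ih =>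
    obtain ⟨rfl, hcs⟩ : a = 0 ∧ c s ≠ 0 := by have := hc_le s; omega
    intro j j' hjj' hj hj'
    simp only [List.getD_map_range_append_zeros] at hj hj' ⊢
    split_ifs at hj hj' <;> try contradiction
    · simpa using hc (Nat.succ_lt_succ hjj') hj hj'
    · have := hc (by omega : j + 1 < s) hj hcs
      omega
    · omega
    · have := ih (by omega : j - (s - 1 + t + 1) < j' - (s - 1 + t + 1)) hj hj'
      omega

theorem kanC_le_one (g ℓ i : ℕ) : kanC g ℓ i ≤ 1 := by
  unfold kanC
  split <;> omega

theorem gapsAtLeast_kanC (g ℓ : ℕ) : GapsAtLeast g (kanC g ℓ) := by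
  intro j j' hjj' hj hj'
  unfold kanC at hj hj'
  rw [ite_ne_right_iff] at hj hj'
  have hmod : j % g = j' % g := hj.1.2.2.trans hj'.1.2.2.symm
  exact Nat.le_of_dvd (by omega) ((Nat.modEq_iff_dvd' hjj'.le).mp hmod)

theorem getD_indList_ne_zero {m i : ℕ} {S : Finset ℕ} (hi1 : 1 ≤ i) (him : i ≤ m) (hi : i ∈ S) :
    (indList m S).getD (m - i) 0 ≠ 0 := by
  rw [indList, List.getD_map_range, if_pos (by omega), Nat.sub_sub_self him, if_pos hi]
  exact one_ne_zero

theorem kangaroo_no_short_gaps_general (g ℓ : ℕ)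
    (S : Finset ℕ) (hS : IsLegalSet (ℓ * g + 1) (kanC g ℓ) S)
    (i i' : ℕ) (hi : i ∈ S) (hi' : i' ∈ S) (hlt : i < i') :
    g ≤ i' - i := by
  obtain ⟨hpos, hlegal⟩ := hS
  have him : i ≤ S.sup id := Finset.le_sup (f := id) hi
  have hi'm : i' ≤ S.sup id := Finset.le_sup (f := id) hi'
  have := (hlegal ⟨i, hi⟩).gapsAtLeast (kanC_le_one g ℓ) (gapsAtLeast_kanC g ℓ)
    (by omega : S.sup id - i' < S.sup id - i)
    (getD_indList_ne_zero (hpos i' hi') hi'm hi') (getD_indList_ne_zero (hpos i hi) him hi)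
  omega

/-- For a Kangaroo recurrence with `ℓ` hops of length `g`, if `S` is the
index set of a legal decomposition (of a positive integer) and `i, i' ∈ S` with `i < i'`,
then `i' - i ≥ g`: no legal decomposition has a gap of length less than `g`. -/
theorem kangaroo_no_short_gaps (g ℓ : ℕ) (hg : 1 ≤ g) (hℓ : 1 ≤ ℓ)
    (S : Finset ℕ) (hS : IsLegalSet (ℓ * g + 1) (kanC g ℓ) S)
    (i i' : ℕ) (hi : i ∈ S) (hi' : i' ∈ S) (hlt : i < i') :
    g ≤ i' - i :=
  kangaroo_no_short_gaps_general g ℓ S hS i i' hi hi' hlt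
end

section
/- Let {K_n} be a Kangaroo recurrence with ℓ hops of length g. For every s ≥ 1, the number of index sets S ⊆ {1, …, s} that are legal (where the empty set is legal, and a nonempty S is legal if it is the index set of the legal decomposition of Σ_{i∈S} K_i) equals K_{s+1}. -/
/-! A coefficient word is legal iff it is a prefix `c_1 ⋯ c_m` with `m < L`, or it reads
`c_1 ⋯ c_{s-1} a w` with `s ≤ L`, `a < c_s` and `w` legal. The position `s` where a word first
drops below `c` is unique, so this grammar is unambiguous and the number `A n` of legal words of
length `n` satisfies `A n = ∑_{s ≤ min n L} c_s A (n - s) + [n < L]`, which is the recurrence of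
`K (n + 1)`. For Kangaroo coefficients `c_i ∈ {0, 1}`, a set `S ⊆ {1, …, s}` is the same as its
indicator word of length `s`, and padding by leading zeros does not affect legality since
`c_1 > 0`. -/

open Finset

section Legal

variable {L B : ℕ} {c : ℕ → ℕ} {l : List ℕ}

def coeffPrefix (c : ℕ → ℕ) (m : ℕ) : List ℕ := (List.range m).map fun i => c (i + 1)

@[simp] lemma length_coeffPrefix (m : ℕ) : (coeffPrefix c m).length = m := by
  simp [coeffPrefix]

@[simp] lemma coeffPrefix_zero : coeffPrefix c 0 = [] := rfl

lemma getElem?_coeffPrefix {m i : ℕ} (h : i < m) : (coeffPrefix c m)[i]? = some (c (i + 1)) := by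
  simp [coeffPrefix, h]

lemma coeffPrefix_append_cons_ne {p q a : ℕ} {r l : List ℕ} (hpq : p < q)
    (ha : a < c (p + 1)) : coeffPrefix c p ++ a :: r ≠ coeffPrefix c q ++ l := by
  intro h
  have := congrArg (·[p]?) h
  rw [List.getElem?_append_right (by simp), List.getElem?_append_left (by simpa),
    getElem?_coeffPrefix hpq] at this
  simp_all

lemma IsLegal.pos (h : IsLegal L c l) : 0 < L := by
  cases h <;> omega

lemma IsLegal.replicate_zero_append (hc1 : 0 < c 1) (h : IsLegal L c l) (t : ℕ) :
    IsLegal L c (List.replicate t 0 ++ l) := by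
  induction t with
  | zero => simpa using h
  | succ t ih => simpa [List.replicate_succ] using IsLegal.long 1 0 0 _ le_rfl h.pos hc1 ih

theorem isLegal_iff (hc1 : 0 < c 1) :
    IsLegal L c l ↔ (∃ m < L, l = coeffPrefix c m) ∨
      ∃ s ∈ Icc 1 L, ∃ a < c s, ∃ r, IsLegal L c r ∧ l = coeffPrefix c (s - 1) ++ a :: r := by
  constructor
  · rintro (⟨m, hm⟩ | ⟨s, t, a, rest, hs1, hsL, ha, hrest⟩)
    · exact .inl ⟨m, hm, rfl⟩
    · exact .inr ⟨s, mem_Icc.2 ⟨hs1, hsL⟩, a, ha, _, hrest.replicate_zero_append hc1 t, rfl⟩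
  · rintro (⟨m, hm, rfl⟩ | ⟨s, hs, a, ha, r, hr, rfl⟩)
    · exact .short m hm
    · exact IsLegal.long s 0 a r (mem_Icc.1 hs).1 (mem_Icc.1 hs).2 ha hr

lemma isLegal_zero_cons_iff (hc1 : 0 < c 1) : IsLegal L c (0 :: l) ↔ IsLegal L c l := by
  refine ⟨fun h => ?_, fun h => by simpa using h.replicate_zero_append hc1 1⟩
  rcases (isLegal_iff hc1).1 h with ⟨_ | m, -, hm⟩ | ⟨s, hs, a, -, r, hr, he⟩
  · simp at hm
  · exact absurd (by simpa using hm) (coeffPrefix_append_cons_ne (l := []) m.succ_pos hc1)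
  · obtain rfl | hs2 := eq_or_lt_of_le (mem_Icc.1 hs).1
    · obtain ⟨-, rfl⟩ := List.cons_eq_cons.1 he
      exact hr
    · exact absurd (by simpa using he)
        (coeffPrefix_append_cons_ne (p := 0) (q := s - 1) (by omega) hc1)

lemma isLegal_replicate_zero_append_iff (hc1 : 0 < c 1) (t : ℕ) :
    IsLegal L c (List.replicate t 0 ++ l) ↔ IsLegal L c l := by
  induction t with
  | zero => simp
  | succ t ih => rw [List.replicate_succ, List.cons_append, isLegal_zero_cons_iff hc1, ih]

lemma IsLegal.forall_lt (hcB : ∀ i, c i < B) (h : IsLegal L c l) : ∀ x ∈ l, x < B := by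
  induction h with
  | short m _ => simp [hcB]
  | long s t a rest _ _ ha _ ih =>
    have hcs := hcB s
    simp only [List.mem_append, List.mem_map, List.mem_cons, List.mem_replicate]
    rintro x (⟨i, -, rfl⟩ | rfl | ⟨-, rfl⟩ | hx)
    exacts [hcB _, by omega, by omega, ih x hx]

end Legal

section Counting

variable {L B : ℕ} {c : ℕ → ℕ} {hB : 1 < B} {l : List ℕ}

open Classical in
noncomputable def legalWords (L : ℕ) (c : ℕ → ℕ) (hB : 1 < B) (n : ℕ) : Finset (List ℕ) :=
  (List.fixedLengthDigits hB n).filter (IsLegal L c)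

lemma mem_legalWords (hcB : ∀ i, c i < B) {n : ℕ} :
    l ∈ legalWords L c hB n ↔ l.length = n ∧ IsLegal L c l := by
  simp only [legalWords, mem_filter, List.mem_fixedLengthDigits_iff]
  exact ⟨fun h => ⟨h.1.1, h.2⟩, fun h => ⟨⟨h.1, h.2.forall_lt hcB⟩, h.2⟩⟩

lemma legalWords_eq (hc1 : 0 < c 1) (hcB : ∀ i, c i < B) (n : ℕ) :
    legalWords L c hB n = (if n < L then {coeffPrefix c n} else ∅) ∪
      (Icc 1 (min n L)).biUnion fun s => ((range (c s)) ×ˢ legalWords L c hB (n - s)).image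
        fun w => coeffPrefix c (s - 1) ++ w.1 :: w.2 := by
  ext l
  simp only [mem_union, mem_biUnion, mem_image, mem_product, mem_range, Prod.exists,
    mem_legalWords hcB, mem_Icc, le_min_iff]
  constructor
  · rintro ⟨hlen, hl⟩
    rcases (isLegal_iff hc1).1 hl with ⟨m, hm, rfl⟩ | ⟨s, hs, a, ha, r, hr, rfl⟩
    · rw [length_coeffPrefix] at hlen
      subst hlen
      simp [hm]
    · simp only [List.length_append, length_coeffPrefix, List.length_cons] at hlen
      obtain ⟨hs1, hsL⟩ := mem_Icc.1 hs
      exact .inr ⟨s, ⟨hs1, by omega, hsL⟩, a, r, ⟨ha, by omega, hr⟩, rfl⟩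
  · rintro (h | ⟨s, hs, a, r, ⟨ha, hrlen, hr⟩, rfl⟩)
    · split_ifs at h with hn
      · rw [mem_singleton.1 h]
        exact ⟨by simp, (isLegal_iff hc1).2 (.inl ⟨n, hn, rfl⟩)⟩
      · simp at h
    · refine ⟨by simp only [List.length_append, length_coeffPrefix, List.length_cons]; omega,
        (isLegal_iff hc1).2 (.inr ⟨s, mem_Icc.2 ⟨hs.1, hs.2.2⟩, a, ha, r, hr, rfl⟩)⟩

lemma card_legalWords_eq_sum (hc1 : 0 < c 1) (hcB : ∀ i, c i < B) (n : ℕ) :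
    (legalWords L c hB n).card =
      ∑ s ∈ Icc 1 (min n L), c s * (legalWords L c hB (n - s)).card +
        if n < L then 1 else 0 := by
  have hne {s s' a : ℕ} {r w : List ℕ} (hs : 1 ≤ s) (hss' : s < s') (ha : a < c s) :
      coeffPrefix c (s - 1) ++ a :: r ≠ coeffPrefix c (s' - 1) ++ w :=
    coeffPrefix_append_cons_ne (by omega) (by rwa [Nat.sub_add_cancel hs])
  rw [legalWords_eq hc1 hcB, card_union_of_disjoint, card_biUnion, add_comm]
  · congr 1
    · refine sum_congr rfl fun s _ => ?_
      rw [card_image_of_injective, card_product, card_range]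
      rintro ⟨a, r⟩ ⟨a', r'⟩ h
      simpa using h
    · split_ifs <;> simp
  · intro s hs s' hs' hss'
    simp only [Function.onFun, disjoint_left, mem_image, mem_product, mem_range, Prod.exists]
    rintro _ ⟨a, r, ⟨ha, -⟩, rfl⟩ ⟨a', r', ⟨ha', -⟩, he⟩
    rcases lt_or_gt_of_ne hss' with h | h
    · exact hne (mem_Icc.1 hs).1 h ha he.symm
    · exact hne (mem_Icc.1 hs').1 h ha' he
  · split_ifs
    · simp only [disjoint_singleton_left, mem_biUnion, mem_image, mem_product, mem_range,
        Prod.exists, not_exists, not_and, mem_Icc, le_min_iff]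
      rintro s ⟨hs1, hsn, -⟩ a r ⟨ha, -⟩ he
      exact hne (w := []) hs1 (by omega : s < n + 1) ha (by simpa using he)
    · exact disjoint_empty_left _

theorem card_legalWords_eq_of_recurrence (hc1 : 0 < c 1) (hcB : ∀ i, c i < B) {K : ℕ → ℕ}
    (hK : ∀ n, K (n + 1) = ∑ s ∈ Icc 1 (min n L), c s * K (n + 1 - s) + if n < L then 1 else 0)
    (n : ℕ) : (legalWords L c hB n).card = K (n + 1) := by
  induction n using Nat.strong_induction_on with
  | _ n ih =>
    rw [card_legalWords_eq_sum hc1 hcB, hK]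
    congr 1
    refine sum_congr rfl fun s hs => ?_
    have hs := mem_Icc.1 hs
    rw [ih (n - s) (by omega), show n - s + 1 = n + 1 - s by omega]

lemma plrs_succ_eq_sum_add_ite {K : ℕ → ℕ} (hL : 0 < L) (hK1 : K 1 = 1)
    (hsmall : ∀ n, 1 ≤ n → n < L → K (n + 1) = (∑ p ∈ Icc 1 n, c p * K (n + 1 - p)) + 1)
    (hrec : ∀ n, L ≤ n → K (n + 1) = ∑ p ∈ Icc 1 L, c p * K (n + 1 - p)) (n : ℕ) :
    K (n + 1) = ∑ s ∈ Icc 1 (min n L), c s * K (n + 1 - s) + if n < L then 1 else 0 := by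
  rcases Nat.eq_zero_or_pos n with rfl | hn
  · simp [hK1, hL]
  by_cases hnL : n < L
  · rw [min_eq_left hnL.le, if_pos hnL, hsmall n hn hnL]
  · rw [min_eq_right (by omega), if_neg hnL, add_zero, hrec n (by omega)]

end Counting

section IndicatorList

variable {L : ℕ} {c : ℕ → ℕ} {m : ℕ} {S T : Finset ℕ}

lemma getElem?_indList {j : ℕ} (hj : j < m) :
    (indList m S)[j]? = some (if m - j ∈ S then 1 else 0) := by
  simp [indList, hj]

lemma indList_succ (S : Finset ℕ) :
    indList (m + 1) S = (if m + 1 ∈ S then 1 else 0) :: indList m S := by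
  refine List.ext_getElem? fun j => ?_
  rcases j with _ | j
  · simp [getElem?_indList]
  · by_cases hj : j < m
    · simp [getElem?_indList, hj, show m + 1 - (j + 1) = m - j by omega]
    · simp [indList, hj]

lemma indList_add_of_forall_le (h : ∀ i ∈ S, i ≤ m) (t : ℕ) :
    indList (m + t) S = List.replicate t 0 ++ indList m S := by
  induction t with
  | zero => simp
  | succ t ih =>
    rw [← add_assoc, indList_succ, ih, if_neg fun hS => by have := h _ hS; omega]
    rfl

lemma eq_of_indList_eq (hS : S ⊆ Icc 1 m) (hT : T ⊆ Icc 1 m) (h : indList m S = indList m T) :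
    S = T := by
  ext i
  by_cases hi : i ∈ Icc 1 m
  · have hi := mem_Icc.1 hi
    have := congrArg (·[m - i]?) h
    simp only [getElem?_indList (show m - i < m by omega), Nat.sub_sub_self hi.2] at this
    split_ifs at this <;> simp_all
  · exact iff_of_false (fun h' => hi (hS h')) (fun h' => hi (hT h'))

lemma exists_indList_eq {l : List ℕ} (hlen : l.length = m) (hl : ∀ x ∈ l, x < 2) :
    ∃ S ⊆ Icc 1 m, indList m S = l := by
  refine ⟨(Icc 1 m).filter fun i => l[m - i]? = some 1, filter_subset _ _, ?_⟩
  refine List.ext_getElem? fun j => ?_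
  by_cases hj : j < m
  · have hlj : l[j]? = some l[j] := List.getElem?_eq_getElem (by omega)
    have := hl _ (List.getElem_mem (l := l) (by omega : j < l.length))
    rw [getElem?_indList hj, hlj]
    simp only [mem_filter, mem_Icc, Nat.sub_sub_self hj.le, hlj, Option.some.injEq]
    split_ifs <;> omega
  · rw [List.getElem?_eq_none (by simp [indList]; omega), List.getElem?_eq_none (by omega)]

lemma isLegalSet_iff_isLegal_indList (hL : 0 < L) (hc1 : 0 < c 1) (hS : S ⊆ Icc 1 m) :
    IsLegalSet L c S ↔ IsLegal L c (indList m S) := by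
  have hpos : ∀ i ∈ S, 1 ≤ i := fun i hi => (mem_Icc.1 (hS hi)).1
  rcases S.eq_empty_or_nonempty with rfl | hne
  · simpa [IsLegalSet, indList] using (isLegal_replicate_zero_append_iff hc1 m).2 (.short 0 hL)
  have hle : ∀ i ∈ S, i ≤ S.sup id := fun i hi => le_sup (f := id) hi
  have hsup : S.sup id ≤ m := Finset.sup_le fun i hi => (mem_Icc.1 (hS hi)).2
  rw [← Nat.add_sub_cancel' hsup, indList_add_of_forall_le hle,
    isLegal_replicate_zero_append_iff hc1]
  exact ⟨fun h => h.2 hne, fun h => ⟨hpos, fun _ => h⟩⟩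

end IndicatorList

theorem ncard_legalSets_eq_card_legalWords {L : ℕ} {c : ℕ → ℕ} (hL : 0 < L) (hc1 : 0 < c 1)
    (hc : ∀ i, c i < 2) (m : ℕ) :
    {S : Finset ℕ | S ⊆ Icc 1 m ∧ IsLegalSet L c S}.ncard =
      (legalWords L c one_lt_two m).card := by
  rw [← Set.ncard_coe_finset]
  refine Set.ncard_congr (fun S _ => indList m S) ?_ ?_ ?_
  · rintro S ⟨hS, hlegal⟩
    exact (mem_legalWords hc).2 ⟨by simp [indList],
      (isLegalSet_iff_isLegal_indList hL hc1 hS).1 hlegal⟩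
  · rintro S T ⟨hS, -⟩ ⟨hT, -⟩ h
    exact eq_of_indList_eq hS hT h
  · intro l hl
    obtain ⟨hlen, hlegal⟩ := (mem_legalWords hc).1 hl
    obtain ⟨S, hS, rfl⟩ := exists_indList_eq hlen (hlegal.forall_lt hc)
    exact ⟨S, ⟨hS, (isLegalSet_iff_isLegal_indList hL hc1 hS).2 hlegal⟩, rfl⟩

theorem kangaroo_count_all_general (g ℓ : ℕ)
    (K : ℕ → ℕ) (hK1 : K 1 = 1)
    (hKsmall : ∀ n, 1 ≤ n → n < ℓ * g + 1 →
      K (n + 1) = (∑ p ∈ Finset.Icc 1 n, kanC g ℓ p * K (n + 1 - p)) + 1)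
    (hKrec : ∀ n, ℓ * g + 1 ≤ n →
      K (n + 1) = ∑ p ∈ Finset.Icc 1 (ℓ * g + 1), kanC g ℓ p * K (n + 1 - p))
    (s : ℕ) :
    {S : Finset ℕ | S ⊆ Finset.Icc 1 s ∧
        IsLegalSet (ℓ * g + 1) (kanC g ℓ) S}.ncard = K (s + 1) := by
  have hc : ∀ i, kanC g ℓ i < 2 := fun i => by unfold kanC; split <;> omega
  have hc1 : 0 < kanC g ℓ 1 := by simp [kanC]
  rw [ncard_legalSets_eq_card_legalWords (Nat.succ_pos _) hc1 hc]
  exact card_legalWords_eq_of_recurrence hc1 hc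
    (plrs_succ_eq_sum_add_ite (Nat.succ_pos _) hK1 hKsmall hKrec) s

/-- For a Kangaroo recurrence `{K_n}` with `ℓ` hops of length `g`
and any `s ≥ 1`, the number of legal index sets `S ⊆ {1, …, s}` (including the empty
set) equals `K_{s+1}`. -/
theorem kangaroo_count_all (g ℓ : ℕ) (hg : 1 ≤ g) (hℓ : 1 ≤ ℓ)
    (K : ℕ → ℕ) (hK1 : K 1 = 1)
    (hKsmall : ∀ n, 1 ≤ n → n < ℓ * g + 1 →
      K (n + 1) = (∑ p ∈ Finset.Icc 1 n, kanC g ℓ p * K (n + 1 - p)) + 1)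
    (hKrec : ∀ n, ℓ * g + 1 ≤ n →
      K (n + 1) = ∑ p ∈ Finset.Icc 1 (ℓ * g + 1), kanC g ℓ p * K (n + 1 - p))
    (s : ℕ) (hs : 1 ≤ s) :
    {S : Finset ℕ | S ⊆ Finset.Icc 1 s ∧
        IsLegalSet (ℓ * g + 1) (kanC g ℓ) S}.ncard = K (s + 1) :=
  kangaroo_count_all_general g ℓ K hK1 hKsmall hKrec s
end

section
/- Fix an integer g ≥ 1. For each ℓ ≥ 1 let λ_{g,ℓ} denote the unique positive real root of the polynomial x^{ℓg+1} − (x^{ℓg} + x^{(ℓ−1)g} + ⋯ + x^g + 1). Then the sequence (λ_{g,ℓ})_{ℓ≥1} is strictly increasing in ℓ, and lim_{ℓ→∞} λ_{g,ℓ} = λ_g, where λ_g denotes the unique real root greater than 1 of x^g − x^{g−1} − 1 = 0. -/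
/-! Multiplying the Kangaroo polynomial `P_ℓ` by `x ^ g - 1` telescopes its geometric sum:
`(x ^ g - 1) P_ℓ(x) = x ^ (ℓg+1) f(x) + 1` with `f(x) = x ^ g - x ^ (g-1) - 1`. Hence
`f(λ_{g,ℓ}) = -λ_{g,ℓ} ^ (-(ℓg+1)) < 0`, and since `f` increases on `[1, ∞)` every `λ_{g,ℓ}` lies
below `λ_g`. For `ℓ' > ℓ` the same identity makes `P_ℓ'` negative at `λ_{g,ℓ}` and positive at
`λ_g`, so `λ_{g,ℓ'}` lies strictly between them. The increasing bounded sequence converges to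
some `L > 1`, and `f(L) = lim f(λ_{g,ℓ}) = 0` forces `L = λ_g`. -/

open Filter Topology Set

namespace Kangaroo

def poly {R : Type*} [CommRing R] (g ℓ : ℕ) (x : R) : R :=
  x ^ (ℓ * g + 1) - ∑ m ∈ Finset.range (ℓ + 1), x ^ (m * g)

def limitPoly {R : Type*} [CommRing R] (g : ℕ) (x : R) : R :=
  x ^ g - x ^ (g - 1) - 1

section CommRing

variable {R : Type*} [CommRing R] {g : ℕ}

theorem sub_one_mul_poly (hg : 1 ≤ g) (ℓ : ℕ) (x : R) :
    (x ^ g - 1) * poly g ℓ x = x ^ (ℓ * g + 1) * limitPoly g x + 1 := by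
  obtain ⟨k, rfl⟩ := Nat.exists_eq_add_of_le' hg
  have hgeom := geom_sum_mul (x ^ (k + 1)) (ℓ + 1)
  simp only [← pow_mul'] at hgeom
  rw [show (ℓ + 1) * (k + 1) = ℓ * (k + 1) + 1 + k by ring, pow_add] at hgeom
  simp only [poly, limitPoly, Nat.add_sub_cancel]
  linear_combination -hgeom

theorem pow_mul_limitPoly_eq_neg_one (hg : 1 ≤ g) {ℓ : ℕ} {x : R} (h : poly g ℓ x = 0) :
    x ^ (ℓ * g + 1) * limitPoly g x = -1 := by
  linear_combination (sub_one_mul_poly hg ℓ x).symm + (x ^ g - 1) * h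

end CommRing

variable {g ℓ : ℕ}

theorem continuous_poly (g ℓ : ℕ) : Continuous (poly (R := ℝ) g ℓ) := by
  unfold poly; fun_prop

theorem continuous_limitPoly (g : ℕ) : Continuous (limitPoly (R := ℝ) g) := by
  unfold limitPoly; fun_prop

theorem limitPoly_strictMonoOn (hg : 1 ≤ g) : StrictMonoOn (limitPoly (R := ℝ) g) (Ici 1) := by
  intro a ha b hb hab
  obtain ⟨k, rfl⟩ := Nat.exists_eq_add_of_le' hg
  have hk : a ^ k ≤ b ^ k := pow_le_pow_left₀ (by linarith [mem_Ici.1 ha]) hab.le k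
  have hb1 : 1 ≤ b ^ k := one_le_pow₀ hb
  simp only [limitPoly, Nat.add_sub_cancel, pow_succ]
  nlinarith [mem_Ici.1 ha]

theorem one_lt_of_poly_eq_zero (hℓ : 1 ≤ ℓ) {x : ℝ} (hx : 0 < x) (h : poly g ℓ x = 0) : 1 < x := by
  have hsum : 1 + x ^ (ℓ * g) ≤ ∑ m ∈ Finset.range (ℓ + 1), x ^ (m * g) := by
    rw [Finset.sum_range_succ]
    gcongr
    simpa using Finset.single_le_sum (fun m _ => (pow_pos hx (m * g)).le)
      (Finset.mem_range.2 hℓ)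
  have hpos := pow_pos hx (ℓ * g)
  rw [poly, sub_eq_zero, pow_succ] at h
  nlinarith

theorem limitPoly_neg_of_poly_eq_zero (hg : 1 ≤ g) {x : ℝ} (hx : 0 < x) (h : poly g ℓ x = 0) :
    limitPoly g x < 0 := by
  have := pow_mul_limitPoly_eq_neg_one hg h
  nlinarith [pow_pos hx (ℓ * g + 1)]

theorem poly_neg_of_lt (hg : 1 ≤ g) {ℓ' : ℕ} (hℓ : ℓ < ℓ') {a : ℝ} (ha : 1 < a)
    (h : poly g ℓ a = 0) : poly g ℓ' a < 0 := by
  obtain ⟨d, rfl⟩ := Nat.exists_eq_add_of_lt hℓ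
  have hgap : 1 < a ^ ((d + 1) * g) := one_lt_pow₀ ha (Nat.mul_pos d.succ_pos hg).ne'
  have key := sub_one_mul_poly hg (ℓ + d + 1) a
  rw [show (ℓ + d + 1) * g + 1 = (d + 1) * g + (ℓ * g + 1) by ring, pow_add, mul_assoc,
    pow_mul_limitPoly_eq_neg_one hg h] at key
  refine neg_of_mul_neg_right (a := a ^ g - 1) ?_ (by linarith [one_le_pow₀ (n := g) ha.le])
  linarith

theorem poly_pos_of_limitPoly_eq_zero (hg : 1 ≤ g) {r : ℝ} (hr : 1 < r) (h : limitPoly g r = 0) :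
    0 < poly g ℓ r := by
  have key := sub_one_mul_poly hg ℓ r
  rw [h, mul_zero, zero_add] at key
  exact pos_of_mul_pos_right (key ▸ one_pos) (by linarith [one_le_pow₀ (n := g) hr.le])

theorem lt_of_poly_eq_zero_of_limitPoly_eq_zero (hg : 1 ≤ g) {a r : ℝ} (ha : 1 < a)
    (h : poly g ℓ a = 0) (hr : 1 < r) (hr0 : limitPoly g r = 0) : a < r :=
  (limitPoly_strictMonoOn hg).lt_iff_lt ha.le hr.le |>.1 <|
    hr0 ▸ limitPoly_neg_of_poly_eq_zero hg (by linarith) h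

theorem exists_poly_eq_zero_mem_Ioo (hg : 1 ≤ g) {ℓ' : ℕ} (hℓ : ℓ < ℓ') {a r : ℝ} (ha : 1 < a)
    (h : poly g ℓ a = 0) (hr : 1 < r) (hr0 : limitPoly g r = 0) :
    ∃ c ∈ Ioo a r, poly g ℓ' c = 0 :=
  intermediate_value_Ioo (lt_of_poly_eq_zero_of_limitPoly_eq_zero hg ha h hr hr0).le
    (continuous_poly g ℓ').continuousOn
    ⟨poly_neg_of_lt hg hℓ ha h, poly_pos_of_limitPoly_eq_zero hg hr hr0⟩

theorem limitPoly_eq_zero_of_tendsto (hg : 1 ≤ g) {x : ℕ → ℝ} {b L : ℝ} (hb : 1 < b)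
    (hxb : ∀ᶠ ℓ in atTop, b ≤ x ℓ) (hroot : ∀ᶠ ℓ in atTop, poly g ℓ (x ℓ) = 0)
    (hL : Tendsto x atTop (𝓝 L)) : limitPoly g L = 0 := by
  have hpow : Tendsto (fun ℓ => x ℓ ^ (ℓ * g + 1)) atTop atTop := by
    refine tendsto_atTop_mono' atTop (hxb.mono fun ℓ hℓ => ?_) (tendsto_pow_atTop_atTop_of_one_lt hb)
    calc b ^ ℓ ≤ x ℓ ^ ℓ := pow_le_pow_left₀ (by linarith) hℓ ℓ
      _ ≤ x ℓ ^ (ℓ * g + 1) := pow_le_pow_right₀ (by linarith) (by nlinarith)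
  have hzero : Tendsto (fun ℓ => limitPoly g (x ℓ)) atTop (𝓝 0) := by
    refine (neg_zero (G := ℝ) ▸ hpow.inv_tendsto_atTop.neg).congr' ?_
    filter_upwards [hroot] with ℓ h
    rw [Pi.inv_apply, neg_eq_iff_eq_neg, eq_comm]
    exact eq_inv_of_mul_eq_one_right (by linear_combination -pow_mul_limitPoly_eq_neg_one hg h)
  exact tendsto_nhds_unique (((continuous_limitPoly g).tendsto L).comp hL) hzero

end Kangaroo

open Kangaroo in
theorem kangaroo_root_monotone_limit_general (g : ℕ)
    (lam : ℕ → ℝ)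
    (hlam : ∀ ℓ, 1 ≤ ℓ → 0 < lam ℓ ∧
      lam ℓ ^ (ℓ * g + 1) = ∑ m ∈ Finset.range (ℓ + 1), lam ℓ ^ (m * g))
    (hlamuniq : ∀ ℓ, 1 ≤ ℓ → ∀ x : ℝ, 0 < x →
      x ^ (ℓ * g + 1) = ∑ m ∈ Finset.range (ℓ + 1), x ^ (m * g) → x = lam ℓ)
    (lamg : ℝ) (hlamg : 1 < lamg)
    (hlamgroot : lamg ^ g - lamg ^ (g - 1) - 1 = 0) :
    (∀ ℓ₁ ℓ₂, 1 ≤ ℓ₁ → ℓ₁ < ℓ₂ → lam ℓ₁ < lam ℓ₂) ∧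
      Filter.Tendsto lam Filter.atTop (nhds lamg) := by
  -- at `g = 0` the truncated `g - 1` turns `hlamgroot` into `1 - 1 - 1 = 0`
  have hg : 1 ≤ g := Nat.one_le_iff_ne_zero.2 fun h => by simp [h] at hlamgroot
  have hroot ℓ (hℓ : 1 ≤ ℓ) : poly g ℓ (lam ℓ) = 0 := sub_eq_zero.2 (hlam ℓ hℓ).2
  have hone ℓ (hℓ : 1 ≤ ℓ) : 1 < lam ℓ := one_lt_of_poly_eq_zero hℓ (hlam ℓ hℓ).1 (hroot ℓ hℓ)
  have hmono ℓ₁ ℓ₂ (h₁ : 1 ≤ ℓ₁) (h₁₂ : ℓ₁ < ℓ₂) : lam ℓ₁ < lam ℓ₂ := by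
    obtain ⟨c, hc, hc0⟩ :=
      exists_poly_eq_zero_mem_Ioo hg h₁₂ (hone ℓ₁ h₁) (hroot ℓ₁ h₁) hlamg hlamgroot
    rw [← hlamuniq ℓ₂ (by omega) c (by linarith [hc.1, hone ℓ₁ h₁]) (sub_eq_zero.1 hc0)]
    exact hc.1
  refine ⟨hmono, ?_⟩
  obtain ⟨L, hL⟩ : ∃ L, Tendsto lam atTop (𝓝 L) := by
    have hmono' : Monotone fun n => lam (n + 1) :=
      monotone_nat_of_le_succ fun n => (hmono _ _ (by omega) (by omega)).le
    have hbdd : BddAbove (range fun n => lam (n + 1)) := ⟨lamg, by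
      rintro _ ⟨n, rfl⟩
      exact (lt_of_poly_eq_zero_of_limitPoly_eq_zero hg (hone _ (by omega))
        (hroot _ (by omega)) hlamg hlamgroot).le⟩
    exact ⟨_, (tendsto_add_atTop_iff_nat 1).1 (tendsto_atTop_ciSup hmono' hbdd)⟩
  have hge : ∀ᶠ ℓ in atTop, lam 1 ≤ lam ℓ := eventually_atTop.2 ⟨1, fun ℓ hℓ =>
    hℓ.eq_or_lt.elim (fun h => h ▸ le_rfl) fun h => (hmono 1 ℓ le_rfl h).le⟩
  have hL1 : 1 < L := (hone 1 le_rfl).trans_le (ge_of_tendsto hL hge)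
  have hL0 := limitPoly_eq_zero_of_tendsto hg (hone 1 le_rfl) hge
    (eventually_atTop.2 ⟨1, hroot⟩) hL
  rwa [← (limitPoly_strictMonoOn hg).injOn hL1.le hlamg.le (hL0.trans hlamgroot.symm)]

/-- Fix `g ≥ 1`. For each `ℓ ≥ 1` let `λ_{g,ℓ} = lam ℓ` be the unique
positive real root of `x^{ℓg+1} − (x^{ℓg} + x^{(ℓ−1)g} + ⋯ + x^g + 1)` (the
characteristic polynomial of the Kangaroo recurrence with `ℓ` hops of length `g`).
Then `(λ_{g,ℓ})_{ℓ ≥ 1}` is strictly increasing in `ℓ`, and `λ_{g,ℓ} → λ_g` as `ℓ → ∞`,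
where `λ_g` is the unique real root greater than `1` of `x^g − x^{g−1} − 1 = 0`. -/
theorem kangaroo_root_monotone_limit (g : ℕ) (hg : 1 ≤ g)
    (lam : ℕ → ℝ)
    (hlam : ∀ ℓ, 1 ≤ ℓ → 0 < lam ℓ ∧
      lam ℓ ^ (ℓ * g + 1) = ∑ m ∈ Finset.range (ℓ + 1), lam ℓ ^ (m * g))
    (hlamuniq : ∀ ℓ, 1 ≤ ℓ → ∀ x : ℝ, 0 < x →
      x ^ (ℓ * g + 1) = ∑ m ∈ Finset.range (ℓ + 1), x ^ (m * g) → x = lam ℓ)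
    (lamg : ℝ) (hlamg : 1 < lamg)
    (hlamgroot : lamg ^ g - lamg ^ (g - 1) - 1 = 0)
    (hlamguniq : ∀ x : ℝ, 1 < x → x ^ g - x ^ (g - 1) - 1 = 0 → x = lamg) :
    (∀ ℓ₁ ℓ₂, 1 ≤ ℓ₁ → ℓ₁ < ℓ₂ → lam ℓ₁ < lam ℓ₂) ∧
      Filter.Tendsto lam Filter.atTop (nhds lamg) :=
  kangaroo_root_monotone_limit_general g lam hlam hlamuniq lamg hlamg hlamgroot
end

section
/- For each integer g ≥ 2, let λ_g denote the unique real root greater than 1 of x^g − x^{g−1} − 1 = 0. Then lim_{g→∞} λ_g^{−g} · (g / log g) = 1; equivalently, λ_g^g ∼ g/log g as g → ∞, so that λ_g → 1 and the writing λ_g = e^{α(g)/g} gives α(g) = log g − log log g + o(log log g). -/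
/-!
Write `λ_g = 1 + ε_g`. The defining equation becomes `(1 + ε)^(g-1) ε = 1`, whose left side is
strictly increasing in `ε ≥ 0`. At `ε = c log g / g` it is about `g^c · c log g / g`, which tends
to `0` for `c < 1` and exceeds `1` for `c > 1`; hence `ε_g · g / log g → 1`. Finally
`λ_g^(-g) = ε_g / λ_g` and `λ_g → 1`.
-/

open Filter Real Topology

lemma strictMonoOn_one_add_pow_mul (n : ℕ) :
    StrictMonoOn (fun x : ℝ => (1 + x) ^ n * x) (Set.Ici 0) := by
  intro x (hx : 0 ≤ x) y (hy : 0 ≤ y) hxy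
  calc (1 + x) ^ n * x ≤ (1 + y) ^ n * x := by gcongr
    _ < (1 + y) ^ n * y := by gcongr

lemma exp_mul_div_one_add_le_one_add_pow (n : ℕ) {x : ℝ} (hx : -1 < x) :
    exp (n * (x / (1 + x))) ≤ (1 + x) ^ n := by
  have hx' : 0 < 1 + x := by linarith
  have hlog : x / (1 + x) ≤ log (1 + x) := by
    have hdiv : 1 - (1 + x)⁻¹ = x / (1 + x) := by field_simp; ring
    exact hdiv ▸ one_sub_inv_le_log_of_pos hx'
  calc exp (n * (x / (1 + x))) ≤ exp (n * log (1 + x)) := by gcongr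
    _ = (1 + x) ^ n := by rw [exp_nat_mul, exp_log hx']

lemma tendsto_log_div_natCast_atTop : Tendsto (fun g : ℕ => log g / g) atTop (𝓝 0) :=
  isLittleO_log_id_atTop.tendsto_div_nhds_zero.comp tendsto_natCast_atTop_atTop

lemma tendsto_log_div_natCast_rpow_atTop {r : ℝ} (hr : 0 < r) :
    Tendsto (fun g : ℕ => log g / (g : ℝ) ^ r) atTop (𝓝 0) :=
  (isLittleO_log_rpow_atTop hr).tendsto_div_nhds_zero.comp tendsto_natCast_atTop_atTop

lemma eventually_one_lt_one_add_pow_pred_mul {c : ℝ} (hc : 1 < c) :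
    ∀ᶠ g : ℕ in atTop, 1 < (1 + c * log g / g) ^ (g - 1) * (c * log g / g) := by
  have hsmall : ∀ᶠ g : ℕ in atTop, c * (log g / g) + c / g < c - 1 := by
    have := (tendsto_log_div_natCast_atTop.const_mul c).add
      (tendsto_const_div_atTop_nhds_zero_nat c)
    rw [mul_zero, add_zero] at this
    exact this.eventually_lt_const (by linarith)
  filter_upwards [hsmall, eventually_ge_atTop 3] with g hsmall hg
  have hg' : (3 : ℝ) ≤ g := by exact_mod_cast hg
  have hL : 1 ≤ log g := by
    rw [le_log_iff_exp_le (by linarith)]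
    linarith [exp_one_lt_d9]
  set L := log g
  set b := c * L / g
  have hb : 0 < b := by positivity
  have hcast : ((g - 1 : ℕ) : ℝ) = g - 1 := by rw [Nat.cast_sub (by omega), Nat.cast_one]
  have hL_le : L ≤ (g - 1 : ℕ) * (b / (1 + b)) := by
    rw [hcast, ← mul_div_assoc, le_div_iff₀ (by linarith)]
    have hsmall' : c * L + c < (c - 1) * g := by
      have := mul_lt_mul_of_pos_right hsmall (by positivity : (0 : ℝ) < g)
      rwa [add_mul, mul_assoc, div_mul_cancel₀ _ (by positivity),
        div_mul_cancel₀ _ (by positivity)] at this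
    simp only [b]
    field_simp
    nlinarith
  calc 1 < c * L := by nlinarith
    _ = exp L * b := by rw [exp_log (by linarith)]; simp only [b]; field_simp
    _ ≤ exp ((g - 1 : ℕ) * (b / (1 + b))) * b := by gcongr
    _ ≤ (1 + b) ^ (g - 1) * b := by
      gcongr; exact exp_mul_div_one_add_le_one_add_pow _ (by linarith)

lemma eventually_one_add_pow_pred_mul_lt_one {c : ℝ} (hc₀ : 0 ≤ c) (hc₁ : c < 1) :
    ∀ᶠ g : ℕ in atTop, (1 + c * log g / g) ^ (g - 1) * (c * log g / g) < 1 := by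
  have hsmall : ∀ᶠ g : ℕ in atTop, c * (log g / (g : ℝ) ^ (1 - c)) < 1 := by
    have := (tendsto_log_div_natCast_rpow_atTop (sub_pos.2 hc₁)).const_mul c
    rw [mul_zero] at this
    exact this.eventually_lt_const one_pos
  filter_upwards [hsmall, eventually_ge_atTop 1] with g hsmall hg
  have hg' : (0 : ℝ) < g := by exact_mod_cast hg
  set a := c * log g / g
  have ha : 0 ≤ a := by have := log_natCast_nonneg g; positivity
  calc (1 + a) ^ (g - 1) * a ≤ (1 + a) ^ g * a := by
        gcongr
        · linarith
        · omega
    _ ≤ exp a ^ g * a := by gcongr; linarith [add_one_le_exp a]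
    _ = (g : ℝ) ^ c * a := by
        rw [← exp_nat_mul, rpow_def_of_pos hg']
        congr 2
        simp only [a]
        field_simp
    _ = c * (log g / (g : ℝ) ^ (1 - c)) := by
        rw [rpow_sub hg', rpow_one]
        simp only [a]
        field_simp
    _ < 1 := hsmall

theorem tendsto_mul_div_log_of_one_add_pow_pred_mul_eq_one {ε : ℕ → ℝ}
    (hε : ∀ᶠ g in atTop, 0 ≤ ε g ∧ (1 + ε g) ^ (g - 1) * ε g = 1) :
    Tendsto (fun g : ℕ => ε g * (g / log g)) atTop (𝓝 1) := by
  have hpos : ∀ᶠ g : ℕ in atTop, 0 < log g ∧ (0 : ℝ) < g := by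
    filter_upwards [eventually_ge_atTop 2] with g hg
    have : (1 : ℝ) < g := by exact_mod_cast hg
    exact ⟨log_pos this, by linarith⟩
  have hscale (g : ℕ) (hL : 0 < log g) (hg : (0 : ℝ) < g) (c : ℝ) :
      c * log g / g * (g / log g) = c := by
    field_simp
  refine tendsto_order.2 ⟨fun a ha => ?_, fun b hb => ?_⟩
  · filter_upwards [hε, hpos, eventually_one_add_pow_pred_mul_lt_one (le_max_right a 0)
      (max_lt ha one_pos)] with g ⟨hε₀, hεg⟩ ⟨hL, hg⟩ hlt
    replace hlt := ((strictMonoOn_one_add_pow_mul _).lt_iff_lt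
      (Set.mem_Ici.2 (by positivity)) hε₀).1 (hlt.trans_eq hεg.symm)
    calc a ≤ max a 0 := le_max_left _ _
      _ = max a 0 * log g / g * (g / log g) := (hscale g hL hg _).symm
      _ < ε g * (g / log g) := by gcongr
  · filter_upwards [hε, hpos, eventually_one_lt_one_add_pow_pred_mul
      (by linarith : 1 < (1 + b) / 2)] with g ⟨hε₀, hεg⟩ ⟨hL, hg⟩ hlt
    replace hlt := ((strictMonoOn_one_add_pow_mul _).lt_iff_lt hε₀
      (Set.mem_Ici.2 (by positivity))).1 (hεg.trans_lt hlt)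
    calc ε g * (g / log g) < (1 + b) / 2 * log g / g * (g / log g) := by gcongr
      _ = (1 + b) / 2 := hscale g hL hg _
      _ < b := by linarith

lemma pow_pred_mul_sub_one_eq_one {x : ℝ} {g : ℕ} (hg : 1 ≤ g)
    (h : x ^ g - x ^ (g - 1) - 1 = 0) : x ^ (g - 1) * (x - 1) = 1 := by
  obtain ⟨n, rfl⟩ := Nat.exists_eq_add_of_le' hg
  rw [Nat.add_sub_cancel, pow_succ] at *
  linear_combination h

lemma zpow_neg_natCast_eq_sub_one_div {x : ℝ} {g : ℕ} (hg : 1 ≤ g) (hx : x ≠ 0)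
    (h : x ^ (g - 1) * (x - 1) = 1) : x ^ (-(g : ℤ)) = (x - 1) / x := by
  obtain ⟨n, rfl⟩ := Nat.exists_eq_add_of_le' hg
  rw [Nat.add_sub_cancel] at h
  rw [zpow_neg, zpow_natCast, pow_succ, eq_div_iff hx]
  field_simp
  exact h.symm

theorem kangaroo_limit_root_asymptotic_general
    (lam : ℕ → ℝ)
    (hlam : ∀ g, 2 ≤ g → 1 < lam g ∧ lam g ^ g - lam g ^ (g - 1) - 1 = 0) :
    Filter.Tendsto (fun g : ℕ => lam g ^ (-(g : ℤ)) * ((g : ℝ) / Real.log g))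
        Filter.atTop (nhds 1) ∧
      Filter.Tendsto lam Filter.atTop (nhds 1) := by
  have hroot : ∀ᶠ g in atTop, 2 ≤ g ∧ 1 < lam g ∧ lam g ^ (g - 1) * (lam g - 1) = 1 :=
    (eventually_ge_atTop 2).mono fun g hg =>
      ⟨hg, (hlam g hg).1, pow_pred_mul_sub_one_eq_one (by omega) (hlam g hg).2⟩
  have hasymp : Tendsto (fun g : ℕ => (lam g - 1) * (g / log g)) atTop (𝓝 1) :=
    tendsto_mul_div_log_of_one_add_pow_pred_mul_eq_one <| hroot.mono fun g ⟨_, h1, h⟩ =>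
      ⟨by linarith, by rwa [add_sub_cancel]⟩
  have hlim : Tendsto lam atTop (𝓝 1) := by
    have := (hasymp.mul tendsto_log_div_natCast_atTop).add_const 1
    rw [mul_zero, zero_add] at this
    refine this.congr' <| hroot.mono fun g ⟨hg, _⟩ => ?_
    have hg' : (1 : ℝ) < g := by exact_mod_cast hg
    have := log_pos hg'
    field_simp
    ring
  refine ⟨?_, hlim⟩
  have := hasymp.div hlim one_ne_zero
  rw [div_one] at this
  refine this.congr' <| hroot.mono fun g ⟨hg, h1, h⟩ => ?_
  show (lam g - 1) * _ / lam g = lam g ^ (-(g : ℤ)) * _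
  rw [zpow_neg_natCast_eq_sub_one_div (by omega) (by positivity) h]
  ring

/-- For each `g ≥ 2` let `λ_g = lam g` be the unique real root greater
than `1` of `x^g − x^{g−1} − 1 = 0`. Then `λ_g^{−g} · (g / log g) → 1` as `g → ∞`;
equivalently `λ_g^g ∼ g / log g`, so in particular `λ_g → 1`. -/
theorem kangaroo_limit_root_asymptotic
    (lam : ℕ → ℝ)
    (hlam : ∀ g, 2 ≤ g → 1 < lam g ∧ lam g ^ g - lam g ^ (g - 1) - 1 = 0)
    (hlamuniq : ∀ g, 2 ≤ g → ∀ x : ℝ, 1 < x → x ^ g - x ^ (g - 1) - 1 = 0 → x = lam g) :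
    Filter.Tendsto (fun g : ℕ => lam g ^ (-(g : ℤ)) * ((g : ℝ) / Real.log g))
        Filter.atTop (nhds 1) ∧
      Filter.Tendsto lam Filter.atTop (nhds 1) :=
  kangaroo_limit_root_asymptotic_general lam hlam
end

section
/- Index the Fibonacci numbers F_1 = 1, F_2 = 2, F_3 = 3, F_4 = 5, …. For all integers n ≥ 1 and k ≥ 0, the number of integers m ∈ [F_n, F_{n+1}) whose Zeckendorf decomposition consists of exactly k+1 summands equals the binomial coefficient C(n−k−1, k) (interpreted as 0 when k > n−k−1 or n−k−1 < 0). -/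
/-!
The sum of a Zeckendorf set with largest index `a` lies in `[F a, F (a + 1))`: the remaining
indices are at most `a - 2` and, inductively, sum to less than `F (a - 1)`. So the integers in
`[F n, F (n + 1))` are exactly the sums of the Zeckendorf sets with largest index `n`, distinct sets
having distinct sums (compare largest indices and induct). Removing `n` matches the sets with `k + 1`
indices with the `k`-element non-adjacent subsets of `{1, …, n - 2}`, which are counted by
`C(n - k - 1, k)` through Pascal's rule, splitting on whether the top element is used.
-/

/-- The Fibonacci numbers indexed as `F 1 = 1, F 2 = 2, F 3 = 3, F 4 = 5, …`,
so `F (n+1) = F n + F (n-1)`. -/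
def F (n : ℕ) : ℕ := Nat.fib (n + 1)

/-- A Zeckendorf index set: indices are `≥ 1` and pairwise non-adjacent
(any two distinct indices differ by at least `2`). -/
def IsZeck (S : Finset ℕ) : Prop :=
  (∀ i ∈ S, 1 ≤ i) ∧ ∀ i ∈ S, ∀ j ∈ S, i < j → 2 ≤ j - i

open Finset

lemma F_pos (n : ℕ) : 0 < F n := Nat.fib_pos.2 n.succ_pos

lemma F_mono : Monotone F := fun _ _ h => Nat.fib_mono (Nat.succ_le_succ h)

lemma F_succ {n : ℕ} (hn : 1 ≤ n) : F (n + 1) = F n + F (n - 1) := by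
  obtain ⟨n, rfl⟩ := Nat.exists_eq_add_of_le' hn
  simp only [F, Nat.add_sub_cancel, Nat.fib_add_two]
  omega

lemma eq_of_mem_Ico_F {a b m : ℕ} (ha : m ∈ Set.Ico (F a) (F (a + 1)))
    (hb : m ∈ Set.Ico (F b) (F (b + 1))) : a = b := by
  by_contra hab
  simp only [Set.mem_Ico] at ha hb
  rcases Nat.lt_or_gt_of_ne hab with h | h
  · have := F_mono (show a + 1 ≤ b from h); omega
  · have := F_mono (show b + 1 ≤ a from h); omega

instance : DecidablePred IsZeck := fun _ => by unfold IsZeck; infer_instance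

namespace IsZeck

lemma mono {S T : Finset ℕ} (hT : IsZeck T) (h : S ⊆ T) : IsZeck S :=
  ⟨fun i hi => hT.1 i (h hi), fun i hi j hj => hT.2 i (h hi) j (h hj)⟩

lemma insert_iff {a : ℕ} {s : Finset ℕ} (hs : ∀ x ∈ s, x < a) :
    IsZeck (insert a s) ↔ 1 ≤ a ∧ (∀ x ∈ s, x + 2 ≤ a) ∧ IsZeck s := by
  constructor
  · intro h
    refine ⟨h.1 a (mem_insert_self a s), fun x hx => ?_, h.mono (subset_insert a s)⟩
    have := h.2 x (mem_insert_of_mem hx) a (mem_insert_self a s) (hs x hx)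
    omega
  · rintro ⟨ha, hgap, hZ⟩
    refine ⟨fun i hi => ?_, fun i hi j hj hij => ?_⟩
    · rcases mem_insert.1 hi with rfl | hi
      exacts [ha, hZ.1 i hi]
    · rcases mem_insert.1 hi with rfl | hi' <;> rcases mem_insert.1 hj with rfl | hj'
      · omega
      · have := hs j hj'; omega
      · have := hgap i hi'; omega
      · exact hZ.2 i hi' j hj' hij

lemma sum_lt {S : Finset ℕ} (hS : IsZeck S) {M : ℕ} (hM : ∀ i ∈ S, i < M) :
    ∑ i ∈ S, F i < F M := by
  induction S using Finset.induction_on_max generalizing M with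
  | empty => simpa using F_pos M
  | insert a s hlt ih =>
    obtain ⟨ha, hgap, hs⟩ := (insert_iff hlt).1 hS
    have hrest : ∑ i ∈ s, F i < F (a - 1) := ih hs fun x hx => by have := hgap x hx; omega
    calc ∑ i ∈ insert a s, F i = F a + ∑ i ∈ s, F i :=
          sum_insert fun h => (hlt a h).false
      _ < F a + F (a - 1) := by omega
      _ = F (a + 1) := (F_succ ha).symm
      _ ≤ F M := F_mono (hM a (mem_insert_self a s))

lemma sum_mem_Ico {S : Finset ℕ} (hS : IsZeck S) {a : ℕ} (ha : a ∈ S)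
    (hmax : ∀ i ∈ S, i ≤ a) : ∑ i ∈ S, F i ∈ Set.Ico (F a) (F (a + 1)) :=
  ⟨single_le_sum (fun _ _ => Nat.zero_le _) ha, hS.sum_lt fun i hi => Nat.lt_succ_of_le (hmax i hi)⟩

lemma sum_mem_Ico_iff {S : Finset ℕ} (hS : IsZeck S) {n : ℕ} :
    ∑ i ∈ S, F i ∈ Set.Ico (F n) (F (n + 1)) ↔ S ⊆ Icc 1 n ∧ n ∈ S := by
  constructor
  · intro h
    have hne : S.Nonempty := by
      rw [nonempty_iff_ne_empty]
      rintro rfl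
      simpa using (F_pos n).trans_le h.1
    have hmax := eq_of_mem_Ico_F (hS.sum_mem_Ico (S.max'_mem hne) (S.le_max' · ·)) h
    exact ⟨fun i hi => mem_Icc.2 ⟨hS.1 i hi, hmax ▸ S.le_max' i hi⟩, hmax ▸ S.max'_mem hne⟩
  · rintro ⟨hsub, hn⟩
    exact hS.sum_mem_Ico hn fun i hi => (mem_Icc.1 (hsub hi)).2

lemma eq_of_sum_eq {S T : Finset ℕ} (hS : IsZeck S) (hT : IsZeck T)
    (h : ∑ i ∈ S, F i = ∑ i ∈ T, F i) : S = T := by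
  induction S using Finset.induction_on_max generalizing T with
  | empty =>
    refine (eq_empty_of_forall_notMem fun i hi => ?_).symm
    exact (F_pos i).ne' (sum_eq_zero_iff.1 (by simpa using h.symm) i hi)
  | insert a s hlt ih =>
    have has : a ∉ s := fun h => (hlt a h).false
    have hmax : ∀ i ∈ insert a s, i ≤ a := by
      intro i hi
      rcases mem_insert.1 hi with rfl | hi
      exacts [le_rfl, (hlt i hi).le]
    obtain ⟨-, haT⟩ := hT.sum_mem_Ico_iff.1 (h ▸ hS.sum_mem_Ico (mem_insert_self a s) hmax)
    rw [← insert_erase haT] at h ⊢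
    rw [sum_insert has, sum_insert (notMem_erase a T)] at h
    rw [ih ((insert_iff hlt).1 hS).2.2 (hT.mono (erase_subset a T)) (by omega)]

end IsZeck

def zeckSubsets (m k : ℕ) : Finset (Finset ℕ) :=
  ((Icc 1 m).powersetCard k).filter IsZeck

lemma mem_zeckSubsets {m k : ℕ} {S : Finset ℕ} :
    S ∈ zeckSubsets m k ↔ S ⊆ Icc 1 m ∧ S.card = k ∧ IsZeck S := by
  simp [zeckSubsets, and_assoc]

lemma zeckSubsets_zero_right (m : ℕ) : zeckSubsets m 0 = {∅} := by
  ext S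
  simp only [mem_zeckSubsets, card_eq_zero, mem_singleton]
  constructor
  · exact fun h => h.2.1
  · rintro rfl
    exact ⟨empty_subset _, rfl, by simp [IsZeck]⟩

lemma zeckSubsets_zero_left (k : ℕ) : zeckSubsets 0 (k + 1) = ∅ := by
  simp [zeckSubsets]

lemma filter_notMem_zeckSubsets (m k : ℕ) :
    (zeckSubsets (m + 1) k).filter (m + 1 ∉ ·) = zeckSubsets m k := by
  ext S
  simp only [mem_filter, mem_zeckSubsets, subset_iff, mem_Icc]
  constructor
  · rintro ⟨⟨hsub, hcard, hZ⟩, hm⟩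
    refine ⟨fun x hx => ⟨(hsub hx).1, ?_⟩, hcard, hZ⟩
    have := hsub hx
    have : x ≠ m + 1 := fun h => hm (h ▸ hx)
    omega
  · rintro ⟨hsub, hcard, hZ⟩
    exact ⟨⟨fun x hx => ⟨(hsub hx).1, (hsub hx).2.trans m.le_succ⟩, hcard, hZ⟩,
      fun h => by have := hsub h; omega⟩

lemma insert_mem_zeckSubsets_iff {n k : ℕ} (hn : 1 ≤ n) {T : Finset ℕ} (hT : n ∉ T) :
    insert n T ∈ zeckSubsets n (k + 1) ↔ T ∈ zeckSubsets (n - 2) k := by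
  simp only [mem_zeckSubsets, card_insert_of_notMem hT, insert_subset_iff, Nat.add_right_cancel_iff]
  constructor
  · rintro ⟨⟨-, hsub⟩, hcard, hZ⟩
    have hlt : ∀ x ∈ T, x < n := fun x hx =>
      lt_of_le_of_ne (mem_Icc.1 (hsub hx)).2 (ne_of_mem_of_not_mem hx hT)
    obtain ⟨-, hgap, hZT⟩ := (IsZeck.insert_iff hlt).1 hZ
    exact ⟨fun x hx => mem_Icc.2 ⟨hZT.1 x hx, by have := hgap x hx; omega⟩, hcard, hZT⟩
  · rintro ⟨hsub, hcard, hZT⟩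
    have hle : ∀ x ∈ T, 1 ≤ x ∧ x ≤ n - 2 := fun x hx => mem_Icc.1 (hsub hx)
    refine ⟨⟨mem_Icc.2 ⟨hn, le_rfl⟩, fun x hx => mem_Icc.2 ?_⟩, hcard, ?_⟩
    · have := hle x hx; omega
    · refine (IsZeck.insert_iff fun x hx => ?_).2 ⟨hn, fun x hx => ?_, hZT⟩ <;>
        · have := hle x hx; omega

lemma card_filter_mem_zeckSubsets {n : ℕ} (hn : 1 ≤ n) (k : ℕ) :
    #((zeckSubsets n (k + 1)).filter (n ∈ ·)) = #(zeckSubsets (n - 2) k) := by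
  have hnotMem : ∀ T ∈ zeckSubsets (n - 2) k, n ∉ T := fun T hT h => by
    have := mem_Icc.1 (mem_zeckSubsets.1 hT |>.1 h); omega
  refine card_nbij' (erase · n) (insert n) (fun S hS => ?_) (fun T hT => ?_)
    (fun S hS => insert_erase (mem_filter.1 hS).2) (fun T hT => erase_insert (hnotMem T hT))
  · obtain ⟨hS, hnS⟩ := mem_filter.1 hS
    rw [mem_coe, ← insert_mem_zeckSubsets_iff hn (notMem_erase n S), insert_erase hnS]
    exact hS
  · exact mem_coe.2 <| mem_filter.2 ⟨(insert_mem_zeckSubsets_iff hn (hnotMem T hT)).2 hT, mem_insert_self n T⟩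

theorem card_zeckSubsets : ∀ m k : ℕ, #(zeckSubsets m k) = (m + 1 - k).choose k
  | m, 0 => by simp [zeckSubsets_zero_right]
  | 0, k + 1 => by simp [zeckSubsets_zero_left]
  | m + 1, k + 1 => by
    rw [← card_filter_add_card_filter_not (p := (m + 1 ∈ ·)),
      card_filter_mem_zeckSubsets (Nat.le_add_left 1 m), filter_notMem_zeckSubsets,
      card_zeckSubsets (m + 1 - 2) k, card_zeckSubsets m (k + 1)]
    rcases Nat.lt_or_ge m k with h | h
    · rw [show m + 1 - 2 + 1 - k = 0 by omega, show m + 1 - (k + 1) = 0 by omega,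
        show m + 1 + 1 - (k + 1) = 0 by omega]
      simp [Nat.choose_eq_zero_of_lt (show 0 < k by omega)]
    · rcases Nat.eq_zero_or_pos m with rfl | hm
      · obtain rfl : k = 0 := by omega
        rfl
      · rw [show m + 1 - 2 + 1 - k = m - k by omega, show m + 1 - (k + 1) = m - k by omega,
          show m + 1 + 1 - (k + 1) = m - k + 1 by omega, Nat.choose_succ_succ']
termination_by m => m

/-- For all `n ≥ 1` and `k ≥ 0`, the number of integers
`m ∈ [F_n, F_{n+1})` whose Zeckendorf decomposition consists of exactly `k+1` summands
equals the binomial coefficient `C(n−k−1, k)` (which is `0` in the degenerate cases). -/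
theorem zeckendorf_summand_count (n k : ℕ) (hn : 1 ≤ n) :
    {m : ℕ | F n ≤ m ∧ m < F (n + 1) ∧
      ∃ S : Finset ℕ, IsZeck S ∧ S.card = k + 1 ∧ m = ∑ i ∈ S, F i}.ncard
      = Nat.choose (n - k - 1) k := by
  have hsums : {m : ℕ | F n ≤ m ∧ m < F (n + 1) ∧
      ∃ S : Finset ℕ, IsZeck S ∧ S.card = k + 1 ∧ m = ∑ i ∈ S, F i} =
      ((zeckSubsets n (k + 1)).filter (n ∈ ·)).image (∑ i ∈ ·, F i) := by
    ext m
    simp only [Set.mem_ofPred_eq, coe_image, coe_filter, Set.mem_image, mem_zeckSubsets]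
    constructor
    · rintro ⟨hlo, hhi, S, hZ, hcard, rfl⟩
      obtain ⟨hsub, hnS⟩ := hZ.sum_mem_Ico_iff.1 ⟨hlo, hhi⟩
      exact ⟨S, ⟨⟨hsub, hcard, hZ⟩, hnS⟩, rfl⟩
    · rintro ⟨S, ⟨⟨hsub, hcard, hZ⟩, hnS⟩, rfl⟩
      obtain ⟨hlo, hhi⟩ := hZ.sum_mem_Ico_iff.2 ⟨hsub, hnS⟩
      exact ⟨hlo, hhi, S, hZ, hcard, rfl⟩
  have hinj : Set.InjOn (∑ i ∈ ·, F i) ((zeckSubsets n (k + 1)).filter (n ∈ ·) : Set _) :=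
    fun S hS T hT h =>
      IsZeck.eq_of_sum_eq (mem_zeckSubsets.1 (mem_filter.1 hS).1).2.2
        (mem_zeckSubsets.1 (mem_filter.1 hT).1).2.2 h
  rw [hsums, Set.ncard_coe_finset, card_image_of_injOn hinj, card_filter_mem_zeckSubsets hn,
    card_zeckSubsets]
  rcases k with - | k
  · simp
  · rw [show n - 2 + 1 - (k + 1) = n - (k + 1) - 1 by omega]
end

section
/- For all integers 1 ≤ i ≤ j and all signs ε, ε′ ∈ {−1, +1}: N(εF_i, ε′F_j) = N(εF_1, ε′F_{j−i+1}); that is, the number of nonzero integers whose far-difference representation has smallest-index summand εF_i and largest-index summand ε′F_j equals the number whose representation has smallest-index summand εF_1 and largest-index summand ε′F_{j−i+1}. -/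
/-- `(P, N)` encodes a far-difference representation: `P` is the set of indices of
positive summands and `N` the set of indices of negative summands; all indices are `≥ 1`,
same-sign indices differ by at least `4`, and opposite-sign indices differ by at least `3`. -/
def IsFarDiff (P N : Finset ℕ) : Prop :=
  (∀ i ∈ P, 1 ≤ i) ∧ (∀ i ∈ N, 1 ≤ i) ∧
  (∀ i ∈ P, ∀ j ∈ P, i < j → 4 ≤ j - i) ∧
  (∀ i ∈ N, ∀ j ∈ N, i < j → 4 ≤ j - i) ∧
  (∀ i ∈ P, ∀ j ∈ N, (i < j → 3 ≤ j - i) ∧ (j < i → 3 ≤ i - j) ∧ i ≠ j)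

/-- The integer represented by the far-difference data `(P, N)`:
`∑_{i ∈ P} F i − ∑_{i ∈ N} F i`. -/
def fdVal (P N : Finset ℕ) : ℤ :=
  (∑ i ∈ P, (F i : ℤ)) - ∑ i ∈ N, (F i : ℤ)

/-- `S n = F n + F (n-4) + F (n-8) + ⋯`, the sum over positive indices, with `S 0 = 0`. -/
def S : ℕ → ℕ
  | 0 => 0
  | n + 1 => F (n + 1) + S (n + 1 - 4)

/-- The summand `ε F i` occurs in the representation `(P, N)`:
`i ∈ P` if `ε = 1`, and `i ∈ N` if `ε = -1`. -/
def SignedMem (ε : ℤ) (i : ℕ) (P N : Finset ℕ) : Prop :=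
  (ε = 1 ∧ i ∈ P) ∨ (ε = -1 ∧ i ∈ N)

/-- The set of (nonzero) integers whose far-difference representation has smallest-index
summand `ε F i` and largest-index summand `ε' F j`. -/
def fdSet (ε : ℤ) (i : ℕ) (ε' : ℤ) (j : ℕ) : Set ℤ :=
  {m : ℤ | ∃ P N : Finset ℕ, IsFarDiff P N ∧ fdVal P N = m ∧
    SignedMem ε i P N ∧ SignedMem ε' j P N ∧ ∀ r ∈ P ∪ N, i ≤ r ∧ r ≤ j}

/-- `N(ε F i, ε' F j)`: the number of nonzero integers whose far-difference
representation has smallest-index summand `ε F i` and largest-index summand `ε' F j`. -/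
noncomputable def fdCount (ε : ℤ) (i : ℕ) (ε' : ℤ) (j : ℕ) : ℕ :=
  (fdSet ε i ε' j).ncard

/-!
Far-difference representations are unique: with `S n = F n + F (n - 4) + ⋯`, a representation
whose summands have indices `≤ n` has absolute value at most `S n`, and if `+F n` occurs its value
exceeds `S (n - 1)` (symmetrically for `-F n`), so the value determines the top summand and
induction removes it. Hence `N(ε F i, ε' F j)` counts representations rather than integers, and
translating every index by `i - 1` matches the representations for `(i, j)` with those for
`(1, j - i + 1)`, since the gap conditions are translation invariant.
-/

open Finset

lemma S_of_pos {n : ℕ} (hn : 1 ≤ n) : S n = F n + S (n - 4) := by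
  obtain ⟨k, rfl⟩ := Nat.exists_eq_add_of_le' hn
  rw [S]

lemma F_eq_S_add_S_add_one : ∀ n, F n = S (n - 1) + S (n - 3) + 1
  | 0 | 1 | 2 | 3 | 4 => by simp [S, F, Nat.fib_add_two]
  | k + 5 => by
    have hF : F (k + 5) = F (k + 3) + F (k + 4) := Nat.fib_add_two
    have hS : S (k + 4) = F (k + 4) + S k := S_of_pos (by omega)
    have ih : F (k + 3) = S (k + 2) + S k + 1 := F_eq_S_add_S_add_one (k + 3)
    change F (k + 5) = S (k + 4) + S (k + 2) + 1
    omega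

lemma sum_F_le_S (P : Finset ℕ) {n : ℕ} (hpos : ∀ r ∈ P, 1 ≤ r)
    (hgap : ∀ a ∈ P, ∀ b ∈ P, a < b → 4 ≤ b - a) (hle : ∀ r ∈ P, r ≤ n) :
    ∑ r ∈ P, F r ≤ S n := by
  induction P using Finset.induction_on_max generalizing n with
  | empty => simp
  | insert a P hlt ih =>
    have ha : 1 ≤ a ∧ a ≤ n := ⟨hpos a (mem_insert_self a P), hle a (mem_insert_self a P)⟩
    have hP : ∑ r ∈ P, F r ≤ S (n - 4) := by
      refine ih (fun r hr => hpos r (mem_insert_of_mem hr))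
        (fun x hx y hy => hgap x (mem_insert_of_mem hx) y (mem_insert_of_mem hy)) fun r hr => ?_
      have := hgap r (mem_insert_of_mem hr) a (mem_insert_self a P) (hlt r hr)
      omega
    rw [sum_insert fun h => (hlt a h).false, S_of_pos (by omega)]
    exact add_le_add (Nat.fib_mono (by omega)) hP

lemma IsFarDiff.symm {P N : Finset ℕ} (h : IsFarDiff P N) : IsFarDiff N P := by
  obtain ⟨hP, hN, hPP, hNN, hPN⟩ := h
  refine ⟨hN, hP, hNN, hPP, fun a ha b hb => ?_⟩
  obtain ⟨h₁, h₂, hne⟩ := hPN b hb a ha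
  exact ⟨h₂, h₁, hne.symm⟩

lemma IsFarDiff.mono {P N P' N' : Finset ℕ} (h : IsFarDiff P N) (hP : P' ⊆ P) (hN : N' ⊆ N) :
    IsFarDiff P' N' := by
  obtain ⟨h₁, h₂, h₃, h₄, h₅⟩ := h
  exact ⟨fun i hi => h₁ i (hP hi), fun i hi => h₂ i (hN hi),
    fun a ha b hb => h₃ a (hP ha) b (hP hb), fun a ha b hb => h₄ a (hN ha) b (hN hb),
    fun a ha b hb => h₅ a (hP ha) b (hN hb)⟩

lemma fdVal_swap (P N : Finset ℕ) : fdVal N P = -fdVal P N := by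
  unfold fdVal; ring

lemma sum_F_le_S_int (P : Finset ℕ) {n : ℕ} (hpos : ∀ r ∈ P, 1 ≤ r)
    (hgap : ∀ a ∈ P, ∀ b ∈ P, a < b → 4 ≤ b - a) (hle : ∀ r ∈ P, r ≤ n) :
    ∑ r ∈ P, (F r : ℤ) ≤ S n := by
  exact_mod_cast sum_F_le_S P hpos hgap hle

namespace IsFarDiff

variable {P N P' N' : Finset ℕ} {n : ℕ}

lemma fdVal_le (h : IsFarDiff P N) (hle : ∀ r ∈ P ∪ N, r ≤ n) : fdVal P N ≤ S n := by
  have hP := sum_F_le_S_int P h.1 h.2.2.1 fun r hr => hle r (mem_union_left N hr)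
  have hN : 0 ≤ ∑ r ∈ N, (F r : ℤ) := sum_nonneg fun r _ => by positivity
  unfold fdVal
  linarith

lemma abs_fdVal_le (h : IsFarDiff P N) (hle : ∀ r ∈ P ∪ N, r ≤ n) : |fdVal P N| ≤ S n := by
  have := h.symm.fdVal_le (n := n) (by rwa [union_comm])
  rw [fdVal_swap] at this
  exact abs_le.mpr ⟨by linarith, h.fdVal_le hle⟩

/-- A positive leading summand `F n` dominates everything below it, because the negative
summands sit at indices `≤ n - 3` and `F n - S (n - 3) = S (n - 1) + 1`. -/
lemma S_lt_fdVal (h : IsFarDiff P N) (hle : ∀ r ∈ P ∪ N, r ≤ n) (hn : n ∈ P) :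
    (S (n - 1) : ℤ) < fdVal P N := by
  have hNle : ∀ r ∈ N, r ≤ n - 3 := fun r hr => by
    obtain ⟨-, hgap, hne⟩ := h.2.2.2.2 n hn r hr
    have := hle r (mem_union_right P hr)
    have := hgap (by omega)
    omega
  have hN := sum_F_le_S_int N h.2.1 h.2.2.2.1 hNle
  have hP : (F n : ℤ) ≤ ∑ r ∈ P, (F r : ℤ) :=
    single_le_sum (f := fun r => (F r : ℤ)) (fun r _ => by positivity) hn
  have hF : (F n : ℤ) = S (n - 1) + S (n - 3) + 1 := by exact_mod_cast F_eq_S_add_S_add_one n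
  unfold fdVal
  linarith

lemma fdVal_lt_neg_S (h : IsFarDiff P N) (hle : ∀ r ∈ P ∪ N, r ≤ n) (hn : n ∈ N) :
    fdVal P N < -(S (n - 1) : ℤ) := by
  have := h.symm.S_lt_fdVal (by rwa [union_comm]) hn
  rw [fdVal_swap] at this
  linarith

lemma mem_of_fdVal_eq (h : IsFarDiff P N) (h' : IsFarDiff P' N') (hle : ∀ r ∈ P ∪ N, r ≤ n)
    (hle' : ∀ r ∈ P' ∪ N', r ≤ n) (heq : fdVal P N = fdVal P' N') (hn : n ∈ P) : n ∈ P' := by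
  have hlow := h.S_lt_fdVal hle hn
  rw [heq] at hlow
  by_contra hnP'
  by_cases hnN' : n ∈ N'
  · have := h'.fdVal_lt_neg_S hle' hnN'
    have : (0 : ℤ) ≤ S (n - 1) := by positivity
    linarith
  · have hlt : ∀ r ∈ P' ∪ N', r ≤ n - 1 := fun r hr => by
      have : r ≠ n := by rintro rfl; rcases mem_union.mp hr with hr | hr <;> contradiction
      have := hle' r hr
      omega
    linarith [le_abs_self (fdVal P' N'), h'.abs_fdVal_le hlt]

lemma lt_of_mem_erase (h : IsFarDiff P N) (hle : ∀ r ∈ P ∪ N, r ≤ n) (hn : n ∈ P) :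
    ∀ r ∈ P.erase n ∪ N, r < n := by
  intro r hr
  have hrn : r ≠ n := by
    rcases mem_union.mp hr with hr | hr
    · exact ne_of_mem_erase hr
    · exact ((h.2.2.2.2 n hn r hr).2.2).symm
  have := hle r (union_subset_union (erase_subset n P) subset_rfl hr)
  omega

lemma fdVal_erase (hn : n ∈ P) : fdVal (P.erase n) N = fdVal P N - F n := by
  unfold fdVal
  rw [← add_sum_erase P _ hn]
  ring

lemma eq_of_fdVal_eq_of_mem
    (ih : ∀ {P N P' N' : Finset ℕ}, IsFarDiff P N → IsFarDiff P' N' → (∀ r ∈ P ∪ N, r < n) →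
      (∀ r ∈ P' ∪ N', r < n) → fdVal P N = fdVal P' N' → P = P' ∧ N = N')
    (h : IsFarDiff P N) (h' : IsFarDiff P' N') (hle : ∀ r ∈ P ∪ N, r ≤ n)
    (hle' : ∀ r ∈ P' ∪ N', r ≤ n) (heq : fdVal P N = fdVal P' N') (hn : n ∈ P) :
    P = P' ∧ N = N' := by
  have hn' := h.mem_of_fdVal_eq h' hle hle' heq hn
  obtain ⟨hPP', hNN'⟩ := ih (h.mono (erase_subset n P) subset_rfl)
    (h'.mono (erase_subset n P') subset_rfl) (h.lt_of_mem_erase hle hn)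
    (h'.lt_of_mem_erase hle' hn') (by rw [fdVal_erase hn, fdVal_erase hn', heq])
  exact ⟨by rw [← insert_erase hn, ← insert_erase hn', hPP'], hNN'⟩

lemma eq_of_fdVal_eq_of_lt (n : ℕ) {P N P' N' : Finset ℕ} (h : IsFarDiff P N)
    (h' : IsFarDiff P' N') (hlt : ∀ r ∈ P ∪ N, r < n) (hlt' : ∀ r ∈ P' ∪ N', r < n)
    (heq : fdVal P N = fdVal P' N') : P = P' ∧ N = N' := by
  induction n generalizing P N P' N' with
  | zero => simp_all [eq_empty_of_forall_notMem]
  | succ n ih =>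
    have hle : ∀ r ∈ P ∪ N, r ≤ n := fun r hr => Nat.lt_succ_iff.mp (hlt r hr)
    have hle' : ∀ r ∈ P' ∪ N', r ≤ n := fun r hr => Nat.lt_succ_iff.mp (hlt' r hr)
    have hswap : fdVal N P = fdVal N' P' := by rw [fdVal_swap P N, fdVal_swap P' N', heq]
    by_cases hP : n ∈ P
    · exact eq_of_fdVal_eq_of_mem ih h h' hle hle' heq hP
    by_cases hN : n ∈ N
    · exact (eq_of_fdVal_eq_of_mem ih h.symm h'.symm (by rwa [union_comm])
        (by rwa [union_comm]) hswap hN).symm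
    have hP' : n ∉ P' := fun hn => hP (h'.mem_of_fdVal_eq h hle' hle heq.symm hn)
    have hN' : n ∉ N' := fun hn => hN (h'.symm.mem_of_fdVal_eq h.symm (by rwa [union_comm])
      (by rwa [union_comm]) hswap.symm hn)
    refine ih h h' (fun r hr => ?_) (fun r hr => ?_) heq
    · have : r ≠ n := by rintro rfl; rcases mem_union.mp hr with hr | hr <;> contradiction
      exact lt_of_le_of_ne (hle r hr) this
    · have : r ≠ n := by rintro rfl; rcases mem_union.mp hr with hr | hr <;> contradiction
      exact lt_of_le_of_ne (hle' r hr) this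

end IsFarDiff

theorem injOn_fdVal : Set.InjOn (fun p : Finset ℕ × Finset ℕ => fdVal p.1 p.2)
    {p | IsFarDiff p.1 p.2} := by
  rintro ⟨P, N⟩ h ⟨P', N'⟩ h' heq
  let n := (P ∪ N ∪ (P' ∪ N')).sup id + 1
  have hlt : ∀ r ∈ P ∪ N ∪ (P' ∪ N'), r < n := fun r hr =>
    Nat.lt_succ_of_le (le_sup (f := id) hr)
  obtain ⟨rfl, rfl⟩ := IsFarDiff.eq_of_fdVal_eq_of_lt n h h'
    (fun r hr => hlt r (mem_union_left _ hr)) (fun r hr => hlt r (mem_union_right _ hr)) heq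
  rfl

def fdReps (ε : ℤ) (i : ℕ) (ε' : ℤ) (j : ℕ) : Set (Finset ℕ × Finset ℕ) :=
  {p | IsFarDiff p.1 p.2 ∧ SignedMem ε i p.1 p.2 ∧ SignedMem ε' j p.1 p.2 ∧
    ∀ r ∈ p.1 ∪ p.2, i ≤ r ∧ r ≤ j}

lemma fdSet_eq_image_fdReps (ε : ℤ) (i : ℕ) (ε' : ℤ) (j : ℕ) :
    fdSet ε i ε' j = (fun p => fdVal p.1 p.2) '' fdReps ε i ε' j := by
  ext m
  simp only [fdSet, fdReps, Set.mem_ofPred_eq, Set.mem_image, Prod.exists]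
  grind

lemma fdCount_eq_ncard_fdReps (ε : ℤ) (i : ℕ) (ε' : ℤ) (j : ℕ) :
    fdCount ε i ε' j = (fdReps ε i ε' j).ncard := by
  rw [fdCount, fdSet_eq_image_fdReps, (injOn_fdVal.mono fun p hp => hp.1).ncard_image]

def shiftRep (d : ℕ) : Finset ℕ × Finset ℕ → Finset ℕ × Finset ℕ :=
  Prod.map (map (addRightEmbedding d)) (map (addRightEmbedding d))

lemma shiftRep_injective (d : ℕ) : Function.Injective (shiftRep d) :=
  (map_injective _).prodMap (map_injective _)

lemma isFarDiff_map_add_iff {P N : Finset ℕ} (d : ℕ) (hP : ∀ r ∈ P, 1 ≤ r)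
    (hN : ∀ r ∈ N, 1 ≤ r) :
    IsFarDiff (P.map (addRightEmbedding d)) (N.map (addRightEmbedding d)) ↔ IsFarDiff P N := by
  simp only [IsFarDiff, mem_map, addRightEmbedding_apply, forall_exists_index, and_imp,
    forall_apply_eq_imp_iff₂, add_lt_add_iff_right, Nat.add_sub_add_right, ne_eq, add_left_inj]
  exact ⟨fun ⟨_, _, h⟩ => ⟨hP, hN, h⟩,
    fun ⟨_, _, h⟩ => ⟨fun a ha => le_add_right (hP a ha), fun a ha => le_add_right (hN a ha), h⟩⟩

lemma shiftRep_mem_fdReps_iff {ε ε' : ℤ} {i j : ℕ} (hi : 1 ≤ i) (d : ℕ)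
    (p : Finset ℕ × Finset ℕ) :
    shiftRep d p ∈ fdReps ε (i + d) ε' (j + d) ↔ p ∈ fdReps ε i ε' j := by
  obtain ⟨P, N⟩ := p
  have hsigned : ∀ η k, SignedMem η (k + d) (P.map (addRightEmbedding d))
      (N.map (addRightEmbedding d)) ↔ SignedMem η k P N := by
    simp [SignedMem]
  have hbounds : (∀ r ∈ P.map (addRightEmbedding d) ∪ N.map (addRightEmbedding d),
      i + d ≤ r ∧ r ≤ j + d) ↔ ∀ r ∈ P ∪ N, i ≤ r ∧ r ≤ j := by
    simp [or_imp, forall_and]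
  simp only [fdReps, shiftRep, Set.mem_ofPred_eq, Prod.map, hsigned, hbounds]
  refine and_congr_left fun ⟨_, _, hb⟩ => isFarDiff_map_add_iff d ?_ ?_
  · exact fun r hr => hi.trans (hb r (mem_union_left N hr)).1
  · exact fun r hr => hi.trans (hb r (mem_union_right P hr)).1

lemma exists_map_addRightEmbedding_eq {Q : Finset ℕ} {d : ℕ} (h : ∀ r ∈ Q, d ≤ r) :
    ∃ P : Finset ℕ, P.map (addRightEmbedding d) = Q := by
  refine ⟨Q.image (· - d), ext fun r => ?_⟩
  simp only [mem_map, mem_image, addRightEmbedding_apply, exists_exists_and_eq_and]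
  exact ⟨fun ⟨x, hx, hr⟩ => by rwa [← hr, Nat.sub_add_cancel (h x hx)],
    fun hr => ⟨r, hr, Nat.sub_add_cancel (h r hr)⟩⟩

lemma fdReps_subset_range_shiftRep (ε : ℤ) (i : ℕ) (ε' : ℤ) (j d : ℕ) :
    fdReps ε (i + d) ε' (j + d) ⊆ Set.range (shiftRep d) := by
  rintro ⟨P', N'⟩ ⟨-, -, -, hb⟩
  obtain ⟨P, rfl⟩ := exists_map_addRightEmbedding_eq fun r hr =>
    le_add_self.trans (hb r (mem_union_left N' hr)).1
  obtain ⟨N, rfl⟩ := exists_map_addRightEmbedding_eq fun r hr =>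
    le_add_self.trans (hb r (mem_union_right _ hr)).1
  exact ⟨(P, N), rfl⟩

lemma fdCount_add (ε : ℤ) {i : ℕ} (hi : 1 ≤ i) (ε' : ℤ) (j d : ℕ) :
    fdCount ε (i + d) ε' (j + d) = fdCount ε i ε' j := by
  have hpre : shiftRep d ⁻¹' fdReps ε (i + d) ε' (j + d) = fdReps ε i ε' j :=
    Set.ext (shiftRep_mem_fdReps_iff hi d)
  rw [fdCount_eq_ncard_fdReps, fdCount_eq_ncard_fdReps, ← hpre,
    Set.ncard_preimage_of_injective_subset_range (shiftRep_injective d)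
      (fdReps_subset_range_shiftRep ε i ε' j d)]

theorem fardifference_shift_general (i j : ℕ) (hi : 1 ≤ i) (hij : i ≤ j)
    (ε ε' : ℤ) :
    fdCount ε i ε' j = fdCount ε 1 ε' (j - i + 1) := by
  have hshift := fdCount_add ε le_rfl ε' (j - i + 1) (i - 1)
  rwa [show 1 + (i - 1) = i by omega, show j - i + 1 + (i - 1) = j by omega] at hshift

/-- For `1 ≤ i ≤ j` and signs `ε, ε' ∈ {−1, +1}`,
`N(ε F_i, ε' F_j) = N(ε F_1, ε' F_{j−i+1})`. -/
theorem fardifference_shift (i j : ℕ) (hi : 1 ≤ i) (hij : i ≤ j)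
    (ε ε' : ℤ) (hε : ε = 1 ∨ ε = -1) (hε' : ε' = 1 ∨ ε' = -1) :
    fdCount ε i ε' j = fdCount ε 1 ε' (j - i + 1) :=
  fardifference_shift_general i j hi hij ε ε'
end
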